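/- arXiv:math/0512524 — 5 statements merged into one kernel-verified Lean document; each statement's English description precedes it below -/
import Mathlib

section
/- Let U be a sub-Markovian resolvent of kernels and ξ a purely excessive measure (ξ U-excessive with inf_{α>0} ξ∘αU_α = 0). Then for every β>0, setting ξ' = ξ − ξ∘βU_β, one has ξ = ξ'∘(I + βU), where U is the initial kernel sup_{α>0} U_α. -/
open MeasureTheory ProbabilityTheory ENNReal Set Filter

variable {E : Type*} [MeasurableSpace E]

/-- The action of the kernel `U α` on nonnegative measurable functions. -/
noncomputable def resOp (U : ℝ → ProbabilityTheory.Kernel E E) (α : ℝ)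
    (f : E → ℝ≥0∞) (x : E) : ℝ≥0∞ := ∫⁻ y, f y ∂(U α x)

/-- A sub-Markovian resolvent of kernels: `α U_α 1 ≤ 1` and the resolvent equation
`U_α = U_β + (β-α) U_α U_β` for `0 < α ≤ β`. -/
def IsSubMarkovResolvent (U : ℝ → ProbabilityTheory.Kernel E E) : Prop :=
  (∀ α : ℝ, 0 < α → ∀ x : E, ENNReal.ofReal α * (U α x) Set.univ ≤ 1) ∧
  (∀ α β : ℝ, 0 < α → α ≤ β → ∀ f : E → ℝ≥0∞, Measurable f → ∀ x : E,
    resOp U α f x = resOp U β f x + ENNReal.ofReal (β - α) * resOp U α (resOp U β f) x)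

/-- The initial kernel `U = sup_{α>0} U_α` acting on functions. -/
noncomputable def iniOp (U : ℝ → ProbabilityTheory.Kernel E E) (f : E → ℝ≥0∞) (x : E) : ℝ≥0∞ :=
  ⨆ (α : ℝ) (_ : 0 < α), resOp U α f x

/-- `s` is `U`-supermedian: `α U_α s ≤ s` for all `α > 0`. -/
def IsSupermedian (U : ℝ → ProbabilityTheory.Kernel E E) (s : E → ℝ≥0∞) : Prop :=
  ∀ α : ℝ, 0 < α → ∀ x, ENNReal.ofReal α * resOp U α s x ≤ s x

/-- The regularization `ŝ(x) = sup_{α>0} α U_α s (x)`. -/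
noncomputable def hatOp (U : ℝ → ProbabilityTheory.Kernel E E) (s : E → ℝ≥0∞) (x : E) : ℝ≥0∞ :=
  ⨆ (α : ℝ) (_ : 0 < α), ENNReal.ofReal α * resOp U α s x

/-- `s` is `U`-excessive: supermedian and `sup_{α>0} α U_α s = s`. -/
def IsExcessiveFn (U : ℝ → ProbabilityTheory.Kernel E E) (s : E → ℝ≥0∞) : Prop :=
  IsSupermedian U s ∧ ∀ x, hatOp U s x = s x

/-- The shifted resolvent `U_β = (U_{β+α})_{α>0}`. -/
def shiftRes (U : ℝ → ProbabilityTheory.Kernel E E) (β : ℝ) :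
    ℝ → ProbabilityTheory.Kernel E E := fun α => U (β + α)

/-- `ξ` is a `U`-excessive measure: `ξ ∘ (α U_α) ≤ ξ` for all `α > 0`. -/
def IsExcessiveMeas (U : ℝ → ProbabilityTheory.Kernel E E) (ξ : Measure E) : Prop :=
  ∀ α : ℝ, 0 < α → ENNReal.ofReal α • ξ.bind (U α) ≤ ξ

/-- The measure `μ ∘ U`, where `U` is the initial kernel `sup_{α>0} U_α`. -/
noncomputable def potMeas (U : ℝ → ProbabilityTheory.Kernel E E) (μ : Measure E) : Measure E :=
  ⨆ (α : ℝ) (_ : 0 < α), μ.bind (U α)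

/-- `ξ` is purely excessive: excessive and `inf_{α>0} ξ ∘ (α U_α) = 0`. -/
def IsPurelyExcessiveMeas (U : ℝ → ProbabilityTheory.Kernel E E) (ξ : Measure E) : Prop :=
  IsExcessiveMeas U ξ ∧ ∀ s : Set E, MeasurableSet s →
    (⨅ (α : ℝ) (_ : 0 < α), (ENNReal.ofReal α • ξ.bind (U α)) s) = 0

/-- The set of non-branch points with respect to `U`. -/
def nonBranch (U : ℝ → ProbabilityTheory.Kernel E E) : Set E :=
  {x | (∀ s t : E → ℝ≥0∞, IsExcessiveFn U s → IsExcessiveFn U t →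
      hatOp U (fun y => min (s y) (t y)) x = min (s x) (t x)) ∧
    hatOp U (fun _ => (1 : ℝ≥0∞)) x = 1}

/-!
Iterating the resolvent equation `U_a = U_b + (b - a) U_a U_b` gives the Neumann series
`U_a = ∑ₖ (b - a)ᵏ U_bᵏ⁺¹` on bounded functions, so `U_a` and `U_b` commute. With this,
`ξ' + (β - α) ξ' U_α + α ξ U_α = ξ` for `0 < α ≤ β`, the cancellation being legitimate because
`ξ` is σ-finite and `α ξ U_α ≤ ξ`. As `α ↓ 0` the measures `ξ' U_α` increase to `ξ' U`, while
`α ξ U_α` decreases setwise to `0` because `ξ` is purely excessive; hence `ξ = ξ' + β ξ' U`.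
-/

namespace MeasureTheory.Measure

variable {α : Type*} {mα : MeasurableSpace α}

theorem eq_of_forall_apply_eq_of_lt_top {μ ν : Measure α} [SigmaFinite μ]
    (h : ∀ s, MeasurableSet s → μ s < ∞ → μ s = ν s) : μ = ν := by
  refine (ext_iff_of_iUnion_eq_univ (iUnion_spanningSets μ)).2 fun n => ext fun t ht => ?_
  rw [restrict_apply ht, restrict_apply ht]
  exact h _ (ht.inter (measurableSet_spanningSets μ n))
    ((measure_mono inter_subset_right).trans_lt (measure_spanningSets_lt_top μ n))

theorem sub_add_cancel_of_le_of_sigmaFinite {μ ν : Measure α} [SigmaFinite μ] (h : ν ≤ μ) :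
    μ - ν + ν = μ := by
  refine (ext_iff_of_iUnion_eq_univ (iUnion_spanningSets μ)).2 fun n => ?_
  have : IsFiniteMeasure (ν.restrict (spanningSets μ n)) := ⟨by
    rw [restrict_apply_univ]
    exact (le_iff'.1 h _).trans_lt (measure_spanningSets_lt_top μ n)⟩
  rw [restrict_add, restrict_sub_eq_restrict_sub_restrict (measurableSet_spanningSets μ n),
    sub_add_cancel_of_le (restrict_mono subset_rfl h)]

theorem eq_of_add_eq_add_of_le_smul {μ ν κ : Measure α} [SigmaFinite μ] {r : ℝ≥0∞}
    (hr : r ≠ ∞) (hκ : κ ≤ r • μ) (h : ν + κ = μ + κ) : ν = μ := by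
  refine (eq_of_forall_apply_eq_of_lt_top fun s _ hs => ?_).symm
  have hκs : κ s ≠ ∞ :=
    ((le_iff'.1 hκ s).trans_lt (ENNReal.mul_lt_top hr.lt_top hs)).ne
  exact ((ENNReal.add_left_inj hκs).1 (by simpa using congrArg (· s) h)).symm

theorem iSup_apply_of_directed {ι : Type*} [Nonempty ι] (μ : ι → Measure α)
    (hμ : Directed (· ≤ ·) μ) {s : Set α} (hs : MeasurableSet s) :
    (⨆ i, μ i) s = ⨆ i, μ i s := by
  let ν : Measure α := ofMeasurable (fun t _ => ⨆ i, μ i t) (by simp) fun f hf hdisj => by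
    have hsum : ∀ F : Finset ℕ, ∑ n ∈ F, ⨆ i, μ i (f n) = ⨆ i, ∑ n ∈ F, μ i (f n) :=
      fun F => ENNReal.finsetSum_iSup fun i j => by
        obtain ⟨k, hik, hjk⟩ := hμ i j
        exact ⟨k, fun n => ⟨le_iff'.1 hik _, le_iff'.1 hjk _⟩⟩
    simp_rw [measure_iUnion hdisj hf, ENNReal.tsum_eq_iSup_sum, hsum]
    exact iSup_comm
  have hν : ∀ i, μ i ≤ ν := fun i => le_iff.2 fun t ht => by
    rw [ofMeasurable_apply t ht]
    exact le_iSup (fun i => μ i t) i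
  refine le_antisymm ?_ (iSup_le fun i => le_iff'.1 (le_iSup μ i) s)
  exact (le_iff'.1 (iSup_le hν) s).trans_eq (ofMeasurable_apply s hs)

theorem bind_mono_left {β : Type*} {mβ : MeasurableSpace β} {μ ν : Measure α} (h : μ ≤ ν)
    (κ : Kernel α β) : μ.bind κ ≤ ν.bind κ :=
  le_iff.2 fun s hs => by
    rw [bind_apply hs κ.aemeasurable, bind_apply hs κ.aemeasurable]
    exact lintegral_mono' h le_rfl

end MeasureTheory.Measure

open scoped Topology

section Resolvent

variable {U : ℝ → Kernel E E} {a b : ℝ} {f : E → ℝ≥0∞} {C : ℝ≥0∞}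

theorem measurable_resOp (hf : Measurable f) : Measurable (resOp U a f) :=
  (Measure.measurable_lintegral hf).comp (U a).measurable

theorem measurable_iterate_resOp (hf : Measurable f) (n : ℕ) :
    Measurable ((resOp U a)^[n] f) := by
  induction n with
  | zero => exact hf
  | succ n ih => rw [Function.iterate_succ_apply']; exact measurable_resOp ih

theorem resOp_le (hU : IsSubMarkovResolvent U) (ha : 0 < a) (hf : ∀ x, f x ≤ C) (x : E) :
    resOp U a f x ≤ C * (ENNReal.ofReal a)⁻¹ :=
  calc resOp U a f x ≤ ∫⁻ _, C ∂(U a x) := lintegral_mono hf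
    _ = C * (U a x) univ := lintegral_const C
    _ ≤ C * (ENNReal.ofReal a)⁻¹ := by
      gcongr
      rw [ENNReal.le_inv_iff_mul_le, mul_comm]
      exact hU.1 a ha x

theorem iterate_resOp_le (hU : IsSubMarkovResolvent U) (ha : 0 < a) (hf : ∀ x, f x ≤ C)
    (n : ℕ) (x : E) : (resOp U a)^[n] f x ≤ C * (ENNReal.ofReal a)⁻¹ ^ n := by
  induction n generalizing x with
  | zero => simpa using hf x
  | succ n ih =>
    rw [Function.iterate_succ_apply', pow_succ, ← mul_assoc]
    exact resOp_le hU ha ih x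

theorem resOp_eq_sum_add_remainder (hU : IsSubMarkovResolvent U) (ha : 0 < a) (hab : a ≤ b)
    (hf : Measurable f) (n : ℕ) (x : E) :
    resOp U a f x = ∑ k ∈ Finset.range n, ENNReal.ofReal (b - a) ^ k * (resOp U b)^[k + 1] f x
      + ENNReal.ofReal (b - a) ^ n * resOp U a ((resOp U b)^[n] f) x := by
  induction n with
  | zero => simp
  | succ n ih =>
    rw [ih, Finset.sum_range_succ, hU.2 a b ha hab _ (measurable_iterate_resOp hf n) x,
      Function.iterate_succ_apply' _ n]
    ring

theorem tendsto_resOp_remainder (hU : IsSubMarkovResolvent U) (ha : 0 < a) (hab : a ≤ b)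
    (hf : ∀ x, f x ≤ C) (hC : C ≠ ∞) (x : E) :
    Tendsto (fun n => ENNReal.ofReal (b - a) ^ n * resOp U a ((resOp U b)^[n] f) x) atTop
      (𝓝 0) := by
  have hb : 0 < b := ha.trans_le hab
  set r := ENNReal.ofReal (b - a) * (ENNReal.ofReal b)⁻¹
  have hr : r < 1 := by
    refine (div_eq_mul_inv _ _).symm.trans_lt (ENNReal.div_lt_of_lt_mul ?_)
    rw [one_mul, ENNReal.ofReal_lt_ofReal_iff hb]
    linarith
  have hbound : ∀ n, ENNReal.ofReal (b - a) ^ n * resOp U a ((resOp U b)^[n] f) x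
      ≤ C * (ENNReal.ofReal a)⁻¹ * r ^ n := fun n =>
    calc ENNReal.ofReal (b - a) ^ n * resOp U a ((resOp U b)^[n] f) x
        ≤ ENNReal.ofReal (b - a) ^ n * (C * (ENNReal.ofReal b)⁻¹ ^ n * (ENNReal.ofReal a)⁻¹) := by
          gcongr
          exact resOp_le hU ha (iterate_resOp_le hU hb hf n) x
      _ = C * (ENNReal.ofReal a)⁻¹ * r ^ n := by rw [mul_pow]; ring
  have hlim : Tendsto (fun n => C * (ENNReal.ofReal a)⁻¹ * r ^ n) atTop (𝓝 0) := by
    simpa using ENNReal.Tendsto.const_mul (ENNReal.tendsto_pow_atTop_nhds_zero_of_lt_one hr)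
      (Or.inr (ENNReal.mul_ne_top hC (by simpa using ha)))
  exact tendsto_of_tendsto_of_tendsto_of_le_of_le tendsto_const_nhds hlim (fun _ => zero_le)
    hbound

theorem resOp_eq_tsum (hU : IsSubMarkovResolvent U) (ha : 0 < a) (hab : a ≤ b)
    (hf : Measurable f) (hfC : ∀ x, f x ≤ C) (hC : C ≠ ∞) (x : E) :
    resOp U a f x = ∑' k, ENNReal.ofReal (b - a) ^ k * (resOp U b)^[k + 1] f x := by
  have hlim :=
    (ENNReal.tendsto_nat_tsum fun k => ENNReal.ofReal (b - a) ^ k * (resOp U b)^[k + 1] f x).add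
      (tendsto_resOp_remainder hU ha hab hfC hC x)
  rw [add_zero] at hlim
  exact tendsto_nhds_unique tendsto_const_nhds
    (hlim.congr fun n => (resOp_eq_sum_add_remainder hU ha hab hf n x).symm)

/-- Both sides equal `∑' k, (b - a) ^ k * U_b^[k + 2] f x`, by the Neumann series for `U_a`. -/
theorem resOp_comm (hU : IsSubMarkovResolvent U) (ha : 0 < a) (hab : a ≤ b)
    (hf : Measurable f) (hfC : ∀ x, f x ≤ C) (hC : C ≠ ∞) (x : E) :
    resOp U a (resOp U b f) x = resOp U b (resOp U a f) x := by
  have hb : 0 < b := ha.trans_le hab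
  have hmeas : ∀ k, Measurable fun y => ENNReal.ofReal (b - a) ^ k * (resOp U b)^[k + 1] f y :=
    fun k => (measurable_iterate_resOp hf _).const_mul _
  calc resOp U a (resOp U b f) x
      = ∑' k, ENNReal.ofReal (b - a) ^ k * (resOp U b)^[k + 1] (resOp U b f) x :=
        resOp_eq_tsum hU ha hab (measurable_resOp hf) (resOp_le hU hb hfC)
          (ENNReal.mul_ne_top hC (by simpa using hb)) x
    _ = ∑' k, ∫⁻ y, ENNReal.ofReal (b - a) ^ k * (resOp U b)^[k + 1] f y ∂(U b x) := by
        congr 1; funext k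
        rw [lintegral_const_mul _ (measurable_iterate_resOp hf _), ← Function.iterate_succ_apply,
          Function.iterate_succ_apply']
        rfl
    _ = resOp U b (resOp U a f) x := by
        rw [← lintegral_tsum fun k => (hmeas k).aemeasurable]
        exact lintegral_congr fun y => (resOp_eq_tsum hU ha hab hf hfC hC y).symm

end Resolvent

section ResolventMeasure

variable {U : ℝ → Kernel E E} {a b : ℝ}

theorem lintegral_bind_eq_lintegral_resOp (μ : Measure E) {f : E → ℝ≥0∞} (hf : Measurable f) :
    ∫⁻ y, f y ∂(μ.bind (U a)) = ∫⁻ x, resOp U a f x ∂μ :=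
  Measure.lintegral_bind (U a).aemeasurable hf.aemeasurable

theorem bind_apply_eq_lintegral_resOp (μ : Measure E) {s : Set E} (hs : MeasurableSet s) :
    μ.bind (U a) s = ∫⁻ x, resOp U a (s.indicator 1) x ∂μ := by
  rw [← lintegral_indicator_one hs,
    lintegral_bind_eq_lintegral_resOp _ (measurable_one.indicator hs)]

theorem bind_bind_apply_eq_lintegral_resOp (μ : Measure E) {s : Set E} (hs : MeasurableSet s) :
    ((μ.bind (U a)).bind (U b)) s = ∫⁻ x, resOp U a (resOp U b (s.indicator 1)) x ∂μ := by
  rw [bind_apply_eq_lintegral_resOp _ hs,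
    lintegral_bind_eq_lintegral_resOp _ (measurable_resOp (measurable_one.indicator hs))]

theorem bind_bind_comm (hU : IsSubMarkovResolvent U) (ha : 0 < a) (hab : a ≤ b) (μ : Measure E) :
    (μ.bind (U a)).bind (U b) = (μ.bind (U b)).bind (U a) := by
  ext s hs
  rw [bind_bind_apply_eq_lintegral_resOp _ hs, bind_bind_apply_eq_lintegral_resOp _ hs]
  exact lintegral_congr fun x =>
    resOp_comm hU ha hab (measurable_one.indicator hs) (Set.indicator_le_self s 1) one_ne_top x

theorem bind_eq_bind_add_smul_bind_bind (hU : IsSubMarkovResolvent U) (ha : 0 < a) (hab : a ≤ b)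
    (μ : Measure E) :
    μ.bind (U a) = μ.bind (U b) + ENNReal.ofReal (b - a) • (μ.bind (U a)).bind (U b) := by
  ext s hs
  have hind : Measurable (s.indicator (1 : E → ℝ≥0∞)) := measurable_one.indicator hs
  rw [Measure.add_apply, Measure.smul_apply, smul_eq_mul, bind_bind_apply_eq_lintegral_resOp _ hs,
    bind_apply_eq_lintegral_resOp _ hs, bind_apply_eq_lintegral_resOp _ hs, ← lintegral_const_mul _
      (measurable_resOp (measurable_resOp hind)), ← lintegral_add_left (measurable_resOp hind)]
  exact lintegral_congr fun x => hU.2 a b ha hab _ hind x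

theorem bind_antitone (hU : IsSubMarkovResolvent U) (ha : 0 < a) (hab : a ≤ b) (μ : Measure E) :
    μ.bind (U b) ≤ μ.bind (U a) :=
  (bind_eq_bind_add_smul_bind_bind hU ha hab μ).symm ▸ Measure.le_add_right le_rfl

theorem smul_bind_mono (hU : IsSubMarkovResolvent U) {ξ : Measure E} (hξ : IsExcessiveMeas U ξ)
    (ha : 0 < a) (hab : a ≤ b) :
    ENNReal.ofReal a • ξ.bind (U a) ≤ ENNReal.ofReal b • ξ.bind (U b) :=
  calc ENNReal.ofReal a • ξ.bind (U a)
      = ENNReal.ofReal a • ξ.bind (U b)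
        + ENNReal.ofReal (b - a) • (ENNReal.ofReal a • ξ.bind (U a)).bind (U b) := by
        rw [Measure.comp_smul, smul_comm, ← smul_add, ← bind_eq_bind_add_smul_bind_bind hU ha hab]
    _ ≤ ENNReal.ofReal a • ξ.bind (U b) + ENNReal.ofReal (b - a) • ξ.bind (U b) := by
        gcongr
        exact Measure.bind_mono_left (hξ a ha) _
    _ = ENNReal.ofReal b • ξ.bind (U b) := by
        rw [← add_smul, ← ENNReal.ofReal_add ha.le (by linarith), add_sub_cancel]

end ResolventMeasure

section Decomposition

variable {U : ℝ → Kernel E E} {ξ ν : Measure E} {a β : ℝ}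

theorem potMeas_apply (hU : IsSubMarkovResolvent U) (μ : Measure E) {s : Set E}
    (hs : MeasurableSet s) : potMeas U μ s = ⨆ (a : ℝ) (_ : 0 < a), μ.bind (U a) s := by
  have : Nonempty {a : ℝ // 0 < a} := ⟨⟨1, one_pos⟩⟩
  rw [potMeas, iSup_subtype', iSup_subtype', Measure.iSup_apply_of_directed _ _ hs]
  exact fun p q => ⟨⟨min p q, lt_min p.2 q.2⟩,
    bind_antitone hU (lt_min p.2 q.2) (min_le_left _ _) μ,
    bind_antitone hU (lt_min p.2 q.2) (min_le_right _ _) μ⟩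

theorem add_smul_bind_add_smul_bind_eq (hU : IsSubMarkovResolvent U) [SigmaFinite ξ]
    (hξ : IsExcessiveMeas U ξ) (ha : 0 < a) (haβ : a ≤ β)
    (hν : ν + ENNReal.ofReal β • ξ.bind (U β) = ξ) :
    ν + ENNReal.ofReal (β - a) • ν.bind (U a) + ENNReal.ofReal a • ξ.bind (U a) = ξ := by
  set m := ENNReal.ofReal β • ξ.bind (U β)
  set c := ENNReal.ofReal (β - a)
  have hcm : c • m.bind (U a) ≤ (c * (ENNReal.ofReal a)⁻¹) • ξ :=
    calc c • m.bind (U a) ≤ c • ξ.bind (U a) := by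
          gcongr
          exact Measure.bind_mono_left (hν ▸ Measure.le_add_left le_rfl) _
      _ = (c * (ENNReal.ofReal a)⁻¹) • (ENNReal.ofReal a • ξ.bind (U a)) := by
          rw [smul_smul, mul_assoc, ENNReal.inv_mul_cancel (by simpa using ha) ofReal_ne_top,
            mul_one]
      _ ≤ (c * (ENNReal.ofReal a)⁻¹) • ξ := by
          gcongr
          exact hξ a ha
  refine Measure.eq_of_add_eq_add_of_le_smul
    (ENNReal.mul_ne_top ofReal_ne_top (by simpa using ha)) hcm ?_
  calc ν + c • ν.bind (U a) + ENNReal.ofReal a • ξ.bind (U a) + c • m.bind (U a)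
      = ν + c • (ν + m).bind (U a) + ENNReal.ofReal a • ξ.bind (U a) := by
        rw [Measure.comp_add, smul_add]
        abel
    _ = ν + ENNReal.ofReal β • ξ.bind (U a) := by
        rw [hν, add_assoc, ← add_smul, ← ofReal_add (by linarith) ha.le, sub_add_cancel]
    _ = ν + m + c • (ENNReal.ofReal β • (ξ.bind (U β)).bind (U a)) := by
        rw [bind_eq_bind_add_smul_bind_bind hU ha haβ ξ, bind_bind_comm hU ha haβ, smul_add,
          smul_comm, add_assoc]
    _ = ξ + c • m.bind (U a) := by rw [hν, Measure.comp_smul]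

theorem add_smul_bind_le (hU : IsSubMarkovResolvent U) [SigmaFinite ξ]
    (hξ : IsExcessiveMeas U ξ) (hβ : 0 < β) (hν : ν + ENNReal.ofReal β • ξ.bind (U β) = ξ)
    (ha : 0 < a) : ν + ENNReal.ofReal β • ν.bind (U a) ≤ ξ := by
  set a' := min a β
  have ha' : 0 < a' := lt_min ha hβ
  calc ν + ENNReal.ofReal β • ν.bind (U a)
      ≤ ν + ENNReal.ofReal β • ν.bind (U a') := by
        gcongr
        exact bind_antitone hU ha' (min_le_left _ _) ν
    _ = ν + ENNReal.ofReal (β - a') • ν.bind (U a') + ENNReal.ofReal a' • ν.bind (U a') := by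
        rw [add_assoc, ← add_smul, ← ofReal_add (by linarith [min_le_right a β]) ha'.le,
          sub_add_cancel]
    _ ≤ ν + ENNReal.ofReal (β - a') • ν.bind (U a') + ENNReal.ofReal a' • ξ.bind (U a') := by
        gcongr
        exact Measure.bind_mono_left (hν ▸ Measure.le_add_right le_rfl) _
    _ = ξ := add_smul_bind_add_smul_bind_eq hU hξ ha' (min_le_right _ _) hν

theorem le_add_smul_potMeas_add (hU : IsSubMarkovResolvent U) [SigmaFinite ξ]
    (hξ : IsExcessiveMeas U ξ) (hβ : 0 < β) (hν : ν + ENNReal.ofReal β • ξ.bind (U β) = ξ)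
    (ha : 0 < a) :
    ξ ≤ ν + ENNReal.ofReal β • potMeas U ν + ENNReal.ofReal a • ξ.bind (U a) := by
  set a' := min a β
  have ha' : 0 < a' := lt_min ha hβ
  calc ξ = ν + ENNReal.ofReal (β - a') • ν.bind (U a') + ENNReal.ofReal a' • ξ.bind (U a') :=
        (add_smul_bind_add_smul_bind_eq hU hξ ha' (min_le_right _ _) hν).symm
    _ ≤ ν + ENNReal.ofReal β • potMeas U ν + ENNReal.ofReal a • ξ.bind (U a) := by
        gcongr _ + ?_ + ?_
        · gcongr
          · linarith
          · exact le_iSup₂ (f := fun a (_ : 0 < a) => ν.bind (U a)) a' ha'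
        · exact smul_bind_mono hU hξ ha' (min_le_left _ _)

end Decomposition

/-- if `ξ` is purely excessive and `β > 0`, then with
`ξ' = ξ - ξ∘βU_β` one has `ξ = ξ'∘(I + βU)`, `U` being the initial kernel. -/
theorem purelyExcessive_decomposition
    (U : ℝ → ProbabilityTheory.Kernel E E) (hU : IsSubMarkovResolvent U)
    (ξ : Measure E) [SigmaFinite ξ] (hξ : IsPurelyExcessiveMeas U ξ)
    (β : ℝ) (hβ : 0 < β) :
    ξ = (ξ - ENNReal.ofReal β • ξ.bind (U β))
        + ENNReal.ofReal β • potMeas U (ξ - ENNReal.ofReal β • ξ.bind (U β)) := by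
  obtain ⟨hexc, hinf⟩ := hξ
  set ν := ξ - ENNReal.ofReal β • ξ.bind (U β)
  have hν : ν + ENNReal.ofReal β • ξ.bind (U β) = ξ :=
    Measure.sub_add_cancel_of_le_of_sigmaFinite (hexc β hβ)
  ext s hs
  refine le_antisymm ?_ ?_
  · calc ξ s ≤ ⨅ (a : ℝ) (_ : 0 < a),
          (ν + ENNReal.ofReal β • potMeas U ν) s + (ENNReal.ofReal a • ξ.bind (U a)) s :=
        le_iInf₂ fun a ha => Measure.le_iff'.1 (le_add_smul_potMeas_add hU hexc hβ hν ha) s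
      _ = (ν + ENNReal.ofReal β • potMeas U ν) s := by
        simp only [← ENNReal.add_iInf, hinf s hs, add_zero]
  · rw [Measure.add_apply, Measure.smul_apply, smul_eq_mul, potMeas_apply hU ν hs]
    simp only [ENNReal.mul_iSup]
    rw [ENNReal.add_biSup' ⟨1, one_pos⟩]
    exact iSup₂_le fun a ha => by
      simpa using Measure.le_iff'.1 (add_smul_bind_le hU hexc hβ hν ha) s
end

section
/- Let N be a bounded kernel on a measurable space (E,B) and μ a σ-finite measure such that for every B ∈ B with μ(B)=0 one has N(1_B)=0 μ-a.e. Then for every E₀ ∈ B with μ(E∖E₀)=0 there exists F ∈ B with F ⊆ E₀, μ(E∖F)=0, and N(1_{E∖F})(x)=0 for every x ∈ F. -/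
open MeasureTheory ProbabilityTheory ENNReal Set Filter

variable {E : Type*} [MeasurableSpace E]

/-! Remove from `E₀` the points from which `N` charges `E₀ᶜ`, and iterate. By hypothesis each
step removes a `μ`-null set, so the intersection `F` still has full measure; and a point of `F`
survived every step, so `N` charges none of the complements of the stages, hence by countable
subadditivity not their union `Fᶜ` either. -/

namespace ProbabilityTheory.Kernel

def cleanStep (N : Kernel E E) (A : Set E) : Set E := A ∩ {x | N x Aᶜ = 0}

/-- The paper's `E_n`, with `E_0 = A`. -/
def cleanSeq (N : Kernel E E) (A : Set E) (n : ℕ) : Set E := (cleanStep N)^[n] A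

variable {N : Kernel E E} {μ : Measure E} {A : Set E}

theorem cleanSeq_succ (n : ℕ) : cleanSeq N A (n + 1) = cleanStep N (cleanSeq N A n) :=
  Function.iterate_succ_apply' _ _ _

theorem measurableSet_cleanStep (hA : MeasurableSet A) : MeasurableSet (cleanStep N A) :=
  hA.inter (N.measurable_coe hA.compl (measurableSet_singleton 0))

theorem measure_compl_cleanStep
    (hN : ∀ B, MeasurableSet B → μ B = 0 → ∀ᵐ x ∂μ, N x B = 0)
    (hA : MeasurableSet A) (hμA : μ Aᶜ = 0) : μ (cleanStep N A)ᶜ = 0 := by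
  rw [cleanStep, compl_inter]
  exact measure_union_null hμA (ae_iff.mp (hN _ hA.compl hμA))

theorem measurableSet_cleanSeq (hA : MeasurableSet A) (n : ℕ) :
    MeasurableSet (cleanSeq N A n) := by
  induction n with
  | zero => exact hA
  | succ n ih => rw [cleanSeq_succ]; exact measurableSet_cleanStep ih

theorem measure_compl_cleanSeq
    (hN : ∀ B, MeasurableSet B → μ B = 0 → ∀ᵐ x ∂μ, N x B = 0)
    (hA : MeasurableSet A) (hμA : μ Aᶜ = 0) (n : ℕ) : μ (cleanSeq N A n)ᶜ = 0 := by
  induction n with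
  | zero => exact hμA
  | succ n ih =>
    rw [cleanSeq_succ]
    exact measure_compl_cleanStep hN (measurableSet_cleanSeq hA n) ih

theorem measure_compl_iInter_cleanSeq
    (hN : ∀ B, MeasurableSet B → μ B = 0 → ∀ᵐ x ∂μ, N x B = 0)
    (hA : MeasurableSet A) (hμA : μ Aᶜ = 0) : μ (⋂ n, cleanSeq N A n)ᶜ = 0 := by
  rw [compl_iInter]
  exact measure_iUnion_null (measure_compl_cleanSeq hN hA hμA)

theorem apply_compl_iInter_cleanSeq {x : E} (hx : x ∈ ⋂ n, cleanSeq N A n) :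
    N x (⋂ n, cleanSeq N A n)ᶜ = 0 := by
  rw [compl_iInter]
  refine measure_iUnion_null fun n => ?_
  have hx_succ := mem_iInter.mp hx (n + 1)
  rw [cleanSeq_succ] at hx_succ
  exact hx_succ.2

end ProbabilityTheory.Kernel

theorem cleaning_lemma_general
    (N : ProbabilityTheory.Kernel E E)
    (μ : Measure E)
    (hN : ∀ B : Set E, MeasurableSet B → μ B = 0 → ∀ᵐ x ∂μ, N x B = 0)
    (E₀ : Set E) (hE₀ : MeasurableSet E₀) (hμE₀ : μ E₀ᶜ = 0) :
    ∃ F : Set E, MeasurableSet F ∧ F ⊆ E₀ ∧ μ Fᶜ = 0 ∧ ∀ x ∈ F, N x Fᶜ = 0 :=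
  ⟨⋂ n, N.cleanSeq E₀ n, .iInter (Kernel.measurableSet_cleanSeq hE₀), iInter_subset _ 0,
    Kernel.measure_compl_iInter_cleanSeq hN hE₀ hμE₀,
    fun _ hx => Kernel.apply_compl_iInter_cleanSeq hx⟩

/-- Lemma 2.1: if `N` is a bounded kernel such that `μ(B) = 0` implies
`N(1_B) = 0` μ-a.e., then for every `E₀` of full measure there is a measurable `F ⊆ E₀`
of full measure with `N(1_{E∖F}) = 0` everywhere on `F`. -/
theorem cleaning_lemma
    (N : ProbabilityTheory.Kernel E E) (hNb : ∃ C : ℝ≥0∞, C < ⊤ ∧ ∀ x, N x Set.univ ≤ C)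
    (μ : Measure E) [SigmaFinite μ]
    (hN : ∀ B : Set E, MeasurableSet B → μ B = 0 → ∀ᵐ x ∂μ, N x B = 0)
    (E₀ : Set E) (hE₀ : MeasurableSet E₀) (hμE₀ : μ E₀ᶜ = 0) :
    ∃ F : Set E, MeasurableSet F ∧ F ⊆ E₀ ∧ μ Fᶜ = 0 ∧ ∀ x ∈ F, N x Fᶜ = 0 :=
  cleaning_lemma_general N μ hN E₀ hE₀ hμE₀
end

section
/- Let U be a sub-Markovian resolvent of kernels with initial kernel U and ξ a U-excessive measure. If for every strictly positive measurable f with ξ(f)<∞ one has Uf<∞ ξ-a.e., then there exists F ∈ B with ξ(E∖F)=0, U(1_{E∖F})=0 on F, and the restricted resolvent U|_F proper (i.e. there is a strictly positive bounded measurable g on F with (U|_F)g ≤ 1). -/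
open MeasureTheory ProbabilityTheory ENNReal Set Filter

variable {E : Type*} [MeasurableSpace E]

/-! Take `h` strictly positive, bounded by `1` and `ξ`-integrable, and put `s = Uh + 1`. The
resolvent equation gives `Uh = U₁h + U₁Uh` (after showing that `U₁` commutes with `U_γ` on bounded
functions), hence `s - U₁s ≥ U₁h + 1 - U₁1 > 0` wherever `s < ∞`. The functions
`min(s, n) - U₁ min(s, n)` are then positive where `s ≤ n`, and their potentials under every `U_β`
are at most `n`; a weighted series of them is the required `g`. By hypothesis `{s = ∞}` is
`ξ`-null, and its absorbing hull, obtained by repeatedly adding the points from which the null set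
is charged by some `U_{1/(j+1)}`, stays `ξ`-null because `ξ` is excessive; `F` is its complement. -/

open Topology

theorem MeasureTheory.exists_pos_le_one_lintegral_lt_top {α : Type*} [MeasurableSpace α]
    (μ : Measure α) [SigmaFinite μ] :
    ∃ h : α → ℝ≥0∞, Measurable h ∧ (∀ x, 0 < h x) ∧ (∀ x, h x ≤ 1) ∧ ∫⁻ x, h x ∂μ < ⊤ := by
  obtain ⟨h, hpos, hh, hint⟩ := exists_pos_lintegral_lt_of_sigmaFinite μ one_ne_zero
  refine ⟨fun x => min (h x) 1, (measurable_coe_nnreal_ennreal.comp hh).min measurable_const,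
    fun x => lt_min (coe_pos.2 (hpos x)) one_pos, fun x => min_le_right _ _, ?_⟩
  exact (lintegral_mono fun x => min_le_left _ _).trans_lt (hint.trans one_lt_top)

theorem ENNReal.add_le_of_forall_add_ofReal_one_sub_mul_le {a b c : ℝ≥0∞} {ε : ℝ} (hε : 0 < ε)
    (h : ∀ δ : ℝ, 0 < δ → δ ≤ ε → a + ENNReal.ofReal (1 - δ) * b ≤ c) : a + b ≤ c := by
  have hlim : Tendsto (fun δ : ℝ => ENNReal.ofReal (1 - δ)) (𝓝[>] 0) (𝓝 1) := by
    have h1 : Tendsto (fun δ : ℝ => 1 - δ) (𝓝 0) (𝓝 (1 - 0)) := tendsto_const_nhds.sub tendsto_id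
    simpa using ENNReal.tendsto_ofReal (h1.mono_left nhdsWithin_le_nhds)
  have := (ENNReal.Tendsto.mul_const (b := b) hlim (Or.inl one_ne_zero)).const_add a
  rw [one_mul] at this
  refine le_of_tendsto this ?_
  filter_upwards [Ioc_mem_nhdsGT hε] with δ hδ using h δ hδ.1 hδ.2

theorem ENNReal.tsum_two_inv_pow_succ_mul_le_one {a : ℕ → ℝ≥0∞} (ha : ∀ n, a n ≤ 1) :
    ∑' n, 2⁻¹ ^ (n + 1) * a n ≤ 1 := by
  refine (ENNReal.tsum_le_tsum fun n => mul_le_of_le_one_right' (ha n)).trans_eq ?_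
  rw [ENNReal.tsum_geometric_add_one, ENNReal.one_sub_inv_two, inv_inv]
  exact ENNReal.inv_mul_cancel two_ne_zero ofNat_ne_top

/-- Contraction argument: iterating the recursion gives `T₁ g ≤ T₂ g + dᵏ c` for every `k`. -/
theorem le_of_eq_add_mul_comp {ι : Type*} {P : ι → Prop} {A : ι → ι} (hA : ∀ g, P g → P (A g))
    {S T₁ T₂ : ι → ℝ≥0∞} {d c : ℝ≥0∞} (hd : d < 1) (hc : c ≠ ⊤)
    (h₁ : ∀ g, P g → T₁ g = S g + d * T₁ (A g)) (h₂ : ∀ g, P g → T₂ g = S g + d * T₂ (A g))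
    (hT₁ : ∀ g, P g → T₁ g ≤ c) {g : ι} (hg : P g) : T₁ g ≤ T₂ g := by
  have hk : ∀ k : ℕ, ∀ g, P g → T₁ g ≤ T₂ g + d ^ k * c := by
    intro k
    induction k with
    | zero => exact fun g hg => by simpa using (hT₁ g hg).trans le_add_self
    | succ k ih =>
      intro g hg
      calc T₁ g = S g + d * T₁ (A g) := h₁ g hg
        _ ≤ S g + d * (T₂ (A g) + d ^ k * c) := by gcongr; exact ih _ (hA g hg)
        _ = T₂ g + d ^ (k + 1) * c := by rw [h₂ g hg]; ring
  have hlim : Tendsto (fun k : ℕ => T₂ g + d ^ k * c) atTop (𝓝 (T₂ g)) := by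
    simpa using (ENNReal.Tendsto.mul_const (ENNReal.tendsto_pow_atTop_nhds_zero_of_lt_one hd)
      (Or.inr hc)).const_add (T₂ g)
  exact ge_of_tendsto' hlim fun k => hk k g hg

theorem eq_of_eq_add_mul_comp {ι : Type*} {P : ι → Prop} {A : ι → ι} (hA : ∀ g, P g → P (A g))
    {S T₁ T₂ : ι → ℝ≥0∞} {d c : ℝ≥0∞} (hd : d < 1) (hc : c ≠ ⊤)
    (h₁ : ∀ g, P g → T₁ g = S g + d * T₁ (A g)) (h₂ : ∀ g, P g → T₂ g = S g + d * T₂ (A g))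
    (hT₁ : ∀ g, P g → T₁ g ≤ c) (hT₂ : ∀ g, P g → T₂ g ≤ c) {g : ι} (hg : P g) :
    T₁ g = T₂ g :=
  le_antisymm (le_of_eq_add_mul_comp hA hd hc h₁ h₂ hT₁ hg)
    (le_of_eq_add_mul_comp hA hd hc h₂ h₁ hT₂ hg)

section Resolvent

variable {U : ℝ → Kernel E E} {f g : E → ℝ≥0∞} {α : ℝ}

theorem resOp_mono (h : f ≤ g) : resOp U α f ≤ resOp U α g := fun _ => lintegral_mono h

theorem resOp_add (hf : Measurable f) (x : E) :
    resOp U α (fun y => f y + g y) x = resOp U α f x + resOp U α g x :=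
  lintegral_add_left hf _

theorem resOp_const_mul (hf : Measurable f) (c : ℝ≥0∞) (x : E) :
    resOp U α (fun y => c * f y) x = c * resOp U α f x :=
  lintegral_const_mul c hf

theorem resOp_tsum {f : ℕ → E → ℝ≥0∞} (hf : ∀ n, Measurable (f n)) (x : E) :
    resOp U α (fun y => ∑' n, f n y) x = ∑' n, resOp U α (f n) x :=
  lintegral_tsum fun n => (hf n).aemeasurable

theorem resOp_indicator_one {S : Set E} (hS : MeasurableSet S) (x : E) :
    resOp U α (S.indicator 1) x = U α x S :=
  lintegral_indicator_one hS

namespace IsSubMarkovResolvent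

variable (hU : IsSubMarkovResolvent U)
include hU

theorem isFiniteKernel (hα : 0 < α) : IsFiniteKernel (U α) := by
  refine ⟨⟨(ENNReal.ofReal α)⁻¹, ENNReal.inv_lt_top.2 (ENNReal.ofReal_pos.2 hα), fun x => ?_⟩⟩
  rw [ENNReal.le_inv_iff_mul_le, mul_comm]
  exact hU.1 α hα x

theorem measurable_resOp (hα : 0 < α) (hf : Measurable f) : Measurable (resOp U α f) :=
  have := hU.isFiniteKernel hα
  hf.lintegral_kernel

theorem resOp_le {C : ℝ≥0∞} (hα : 0 < α) (hf : ∀ y, f y ≤ C) (x : E) :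
    resOp U α f x ≤ C * (ENNReal.ofReal α)⁻¹ := by
  refine (lintegral_mono hf).trans ?_
  rw [lintegral_const]
  gcongr
  rw [ENNReal.le_inv_iff_mul_le, mul_comm]
  exact hU.1 α hα x

theorem resOp_one_le {C : ℝ≥0∞} (hf : ∀ y, f y ≤ C) (x : E) : resOp U 1 f x ≤ C := by
  simpa using hU.resOp_le one_pos hf x

theorem resOp_antitone {p q : ℝ} (hp : 0 < p) (hpq : p ≤ q) (hf : Measurable f) (x : E) :
    resOp U q f x ≤ resOp U p f x := by
  rw [hU.2 p q hp hpq f hf x]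
  exact le_self_add

theorem iniOp_eq_iSup_nat (hf : Measurable f) (x : E) :
    iniOp U f x = ⨆ k : ℕ, resOp U (1 / (k + 1)) f x := by
  refine le_antisymm (iSup₂_le fun α hα => ?_) (iSup_le fun k => ?_)
  · obtain ⟨k, hk⟩ := exists_nat_one_div_lt hα
    exact (hU.resOp_antitone (by positivity) hk.le hf x).trans (le_iSup_of_le k le_rfl)
  · exact le_iSup₂_of_le (f := fun α (_ : 0 < α) => resOp U α f x) _ (by positivity) le_rfl

theorem measurable_iniOp (hf : Measurable f) : Measurable (iniOp U f) := by
  simp_rw [funext (hU.iniOp_eq_iSup_nat hf)]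
  exact Measurable.iSup fun k => hU.measurable_resOp (by positivity) hf

theorem resOp_one_resOp_comm {γ : ℝ} (hγ : 0 < γ) (hγ1 : γ ≤ 1) (hf : Measurable f)
    (hf1 : ∀ y, f y ≤ 1) (x : E) :
    resOp U 1 (resOp U γ f) x = resOp U γ (resOp U 1 f) x := by
  have hres : ∀ g, Measurable g →
      resOp U γ g = fun y => resOp U 1 g y + ENNReal.ofReal (1 - γ) * resOp U γ (resOp U 1 g) y :=
    fun g hg => funext (hU.2 γ 1 hγ hγ1 g hg)
  refine eq_of_eq_add_mul_comp (P := fun g => Measurable g ∧ ∀ y, g y ≤ 1) (A := resOp U 1)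
    (S := fun g => resOp U 1 (resOp U 1 g) x) (T₁ := fun g => resOp U 1 (resOp U γ g) x)
    (T₂ := fun g => resOp U γ (resOp U 1 g) x) (c := (ENNReal.ofReal γ)⁻¹)
    (fun g hg => ⟨hU.measurable_resOp one_pos hg.1, hU.resOp_one_le hg.2⟩)
    (ENNReal.ofReal_lt_one.2 (by linarith)) (by simpa using hγ) (fun g hg => ?_)
    (fun g hg => hU.2 γ 1 hγ hγ1 _ (hU.measurable_resOp one_pos hg.1) x)
    (fun g hg => ?_) (fun g hg => ?_) ⟨hf, hf1⟩
  · have hm := hU.measurable_resOp one_pos hg.1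
    rw [hres g hg.1, resOp_add hm, resOp_const_mul (hU.measurable_resOp hγ hm)]
  · exact hU.resOp_one_le (fun y => by simpa using hU.resOp_le hγ hg.2 y) x
  · simpa using hU.resOp_le hγ (hU.resOp_one_le hg.2) x

theorem resOp_one_iniOp (hf : Measurable f) (hf1 : ∀ y, f y ≤ 1) (x : E) :
    resOp U 1 (iniOp U f) x = iniOp U (resOp U 1 f) x := by
  have hmono : Monotone fun k : ℕ => resOp U (1 / (k + 1)) f := fun k l hkl y =>
    hU.resOp_antitone (by positivity) (by gcongr) hf y
  calc resOp U 1 (iniOp U f) x = ⨆ k : ℕ, resOp U 1 (resOp U (1 / (k + 1)) f) x := by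
        rw [funext (hU.iniOp_eq_iSup_nat hf)]
        exact lintegral_iSup (fun k => hU.measurable_resOp (by positivity) hf) hmono
    _ = ⨆ k : ℕ, resOp U (1 / (k + 1)) (resOp U 1 f) x := by
        congr 1 with k
        exact hU.resOp_one_resOp_comm (by positivity) (by simp [inv_le_one_of_one_le₀]) hf hf1 x
    _ = iniOp U (resOp U 1 f) x := (hU.iniOp_eq_iSup_nat (hU.measurable_resOp one_pos hf) x).symm

theorem iniOp_eq_resOp_one_add_iniOp_resOp_one (hf : Measurable f) (x : E) :
    iniOp U f x = resOp U 1 f x + iniOp U (resOp U 1 f) x := by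
  have hf₁ := hU.measurable_resOp one_pos hf
  refine le_antisymm (iSup₂_le fun α hα => ?_) ?_
  · rcases le_total α 1 with hα1 | hα1
    · rw [hU.2 α 1 hα hα1 f hf x]
      gcongr
      exact mul_le_of_le_one_left' (ENNReal.ofReal_le_one.2 (by linarith)) |>.trans
        (le_iSup₂_of_le (f := fun α (_ : 0 < α) => resOp U α (resOp U 1 f) x) α hα le_rfl)
    · exact (hU.resOp_antitone one_pos hα1 hf x).trans le_self_add
  rw [hU.iniOp_eq_iSup_nat hf₁, ENNReal.add_iSup]
  refine iSup_le fun k => ENNReal.add_le_of_forall_add_ofReal_one_sub_mul_le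
    (by positivity : (0 : ℝ) < 1 / (k + 1)) fun δ hδ hδk => ?_
  calc resOp U 1 f x + ENNReal.ofReal (1 - δ) * resOp U (1 / (k + 1)) (resOp U 1 f) x
      ≤ resOp U 1 f x + ENNReal.ofReal (1 - δ) * resOp U δ (resOp U 1 f) x := by
        gcongr; exact hU.resOp_antitone hδ hδk hf₁ x
    _ = resOp U δ f x :=
        (hU.2 δ 1 hδ (hδk.trans (by simp [inv_le_one_of_one_le₀])) f hf x).symm
    _ ≤ iniOp U f x := le_iSup₂_of_le (f := fun α (_ : 0 < α) => resOp U α f x) δ hδ le_rfl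

theorem iniOp_eq_resOp_one_add_resOp_one_iniOp (hf : Measurable f) (hf1 : ∀ y, f y ≤ 1)
    (x : E) : iniOp U f x = resOp U 1 f x + resOp U 1 (iniOp U f) x := by
  rw [hU.resOp_one_iniOp hf hf1, ← hU.iniOp_eq_resOp_one_add_iniOp_resOp_one hf]

end IsSubMarkovResolvent

end Resolvent

section Proper

variable {U : ℝ → Kernel E E}

namespace IsSubMarkovResolvent

variable (hU : IsSubMarkovResolvent U)
include hU

theorem resOp_one_min_le {s : E → ℝ≥0∞} (hs : ∀ y, resOp U 1 s y ≤ s y) (C : ℝ≥0∞) (x : E) :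
    resOp U 1 (fun y => min (s y) C) x ≤ min (s x) C :=
  le_min ((resOp_mono (fun _ => min_le_left _ _) x).trans (hs x))
    (hU.resOp_one_le (fun _ => min_le_right _ _) x)

theorem resOp_tsub_resOp_one_le {w : E → ℝ≥0∞} (hw : Measurable w)
    (hsup : ∀ y, resOp U 1 w y ≤ w y) {C : ℝ≥0∞} (hC : C ≠ ⊤) (hwC : ∀ y, w y ≤ C) {β : ℝ}
    (hβ : 0 < β) (x : E) : resOp U β (fun y => w y - resOp U 1 w y) x ≤ C := by
  have hw₁ := hU.measurable_resOp one_pos hw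
  have hc : Measurable fun y => w y - resOp U 1 w y := hw.sub hw₁
  wlog hβ1 : β < 1 generalizing β with H
  · exact (hU.resOp_antitone (by norm_num) (by linarith) hc x).trans
      (H (by norm_num : (0 : ℝ) < 1 / 2) (by norm_num))
  have hX : resOp U β (resOp U 1 w) x ≠ ⊤ :=
    ne_top_of_le_ne_top (mul_ne_top hC (inv_ne_top.2 (ofReal_pos.2 hβ).ne')) (hU.resOp_le hβ (hU.resOp_one_le hwC) x)
  -- `U_β (w - U₁w) + U_β U₁w = U_β w = U₁w + (1 - β) U_β U₁w`, then cancel `U_β U₁w`.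
  have hsplit : resOp U β (fun y => w y - resOp U 1 w y) x + resOp U β (resOp U 1 w) x
      ≤ resOp U 1 w x + resOp U β (resOp U 1 w) x := by
    rw [← resOp_add hc, funext fun y => tsub_add_cancel_of_le (hsup y), hU.2 β 1 hβ hβ1.le w hw x]
    gcongr
    exact mul_le_of_le_one_left' (ENNReal.ofReal_le_one.2 (by linarith))
  exact (ENNReal.le_of_add_le_add_right hX hsplit).trans ((hsup x).trans (hwC x))

theorem exists_resOp_le_one_of_resOp_one_lt {s : E → ℝ≥0∞} (hs : Measurable s)
    (hlt : ∀ x, s x ≠ ⊤ → resOp U 1 s x < s x) :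
    ∃ g : E → ℝ≥0∞, Measurable g ∧ (∀ x, s x ≠ ⊤ → 0 < g x) ∧ (∀ x, g x ≤ 1) ∧
      ∀ β, 0 < β → ∀ x, resOp U β g x ≤ 1 := by
  have hsup : ∀ x, resOp U 1 s x ≤ s x := fun x =>
    (eq_or_ne (s x) ⊤).elim (fun h => h ▸ le_top) fun h => (hlt x h).le
  set w : ℕ → E → ℝ≥0∞ := fun n y => min (s y) (n + 1)
  set f : ℕ → E → ℝ≥0∞ := fun n y => ((n : ℝ≥0∞) + 1)⁻¹ * (w n y - resOp U 1 (w n) y)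
  have hw : ∀ n, Measurable (w n) := fun n => hs.min measurable_const
  have hc : ∀ n, Measurable fun y => w n y - resOp U 1 (w n) y := fun n =>
    (hw n).sub (hU.measurable_resOp one_pos (hw n))
  have hf : ∀ n, Measurable (f n) := fun n => (hc n).const_mul _
  have hscale : ∀ (n : ℕ) {a : ℝ≥0∞}, a ≤ n + 1 → ((n : ℝ≥0∞) + 1)⁻¹ * a ≤ 1 := fun n a ha =>
    ENNReal.inv_mul_le_iff (by positivity) (by simp) |>.2 (by simpa using ha)
  have hf1 : ∀ n y, f n y ≤ 1 := fun n y => hscale n (tsub_le_self.trans (min_le_right _ _))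
  have hfβ : ∀ n β, 0 < β → ∀ x, resOp U β (f n) x ≤ 1 := fun n β hβ x => by
    simp only [f]
    rw [resOp_const_mul (hc n)]
    exact hscale n (hU.resOp_tsub_resOp_one_le (hw n) (hU.resOp_one_min_le hsup _)
      (by simp) (fun y => min_le_right _ _) hβ x)
  have hfpos : ∀ x, s x ≠ ⊤ → ∃ n, 0 < f n x := by
    intro x hx
    obtain ⟨n, hn⟩ := ENNReal.exists_nat_gt hx
    have hwx : w n x = s x := min_eq_left (hn.le.trans le_self_add)
    have hlt' : resOp U 1 (w n) x < w n x :=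
      hwx ▸ (resOp_mono (fun y => min_le_left _ _) x).trans_lt (hlt x hx)
    exact ⟨n, ENNReal.mul_pos (by simp) (tsub_pos_of_lt hlt').ne'⟩
  refine ⟨fun y => ∑' n, 2⁻¹ ^ (n + 1) * f n y,
    Measurable.tsum fun n => (hf n).const_mul _, fun x hx => ?_,
    fun y => ENNReal.tsum_two_inv_pow_succ_mul_le_one fun n => hf1 n y, fun β hβ x => ?_⟩
  · obtain ⟨n, hn⟩ := hfpos x hx
    exact (ENNReal.mul_pos (by simp) hn.ne').trans_le (ENNReal.le_tsum n)
  · rw [resOp_tsum fun n => (hf n).const_mul _]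
    simp_rw [resOp_const_mul (hf _)]
    exact ENNReal.tsum_two_inv_pow_succ_mul_le_one fun n => hfβ n β hβ x

theorem resOp_one_lt_iniOp_add_one {h : E → ℝ≥0∞} (hh : Measurable h) (hpos : ∀ y, 0 < h y)
    (h1 : ∀ y, h y ≤ 1) {x : E} (hx : iniOp U h x ≠ ⊤) :
    resOp U 1 (fun y => iniOp U h y + 1) x < iniOp U h x + 1 := by
  have hv := hU.iniOp_eq_resOp_one_add_resOp_one_iniOp hh h1 x
  have hfin : resOp U 1 (iniOp U h) x ≠ ⊤ := ne_top_of_le_ne_top hx (hv ▸ le_add_self)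
  rw [resOp_add (hU.measurable_iniOp hh), hv, add_comm (resOp U 1 h x), add_assoc]
  refine ENNReal.add_lt_add_left hfin ?_
  have hmass : resOp U 1 (fun _ => 1) x = U 1 x univ := lintegral_one
  -- Either `U₁1(x) < 1`, or `U₁` has full mass at `x` and then `U₁h(x) > 0`.
  rcases (hU.resOp_one_le (fun _ => le_rfl) x).lt_or_eq with hlt | heq
  · exact hlt.trans_le le_add_self
  · have hne : U 1 x ≠ 0 := by
      rw [← Measure.measure_univ_ne_zero, ← hmass, heq]; exact one_ne_zero
    have hpos' : 0 < resOp U 1 h x := by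
      rw [resOp, lintegral_pos_iff_support hh, (Function.support_eq_univ fun y => (hpos y).ne')]
      exact Measure.measure_univ_pos.2 hne
    rw [heq, add_comm]
    exact ENNReal.lt_add_right one_ne_top hpos'.ne'

end IsSubMarkovResolvent

end Proper

section Absorbing

variable {U : ℝ → Kernel E E}

noncomputable def cleaningSeq (U : ℝ → Kernel E E) (M : Set E) : ℕ → Set E
  | 0 => M
  | k + 1 => cleaningSeq U M k ∪ ⋃ j : ℕ, {x | U (1 / (j + 1)) x (cleaningSeq U M k) ≠ 0}

theorem measurableSet_cleaningSeq {M : Set E} (hM : MeasurableSet M) (k : ℕ) :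
    MeasurableSet (cleaningSeq U M k) := by
  induction k with
  | zero => exact hM
  | succ k ih =>
    exact ih.union (.iUnion fun j => (Kernel.measurable_coe _ ih (measurableSet_singleton 0)).compl)

theorem IsExcessiveMeas.measure_setOf_apply_ne_zero {ξ : Measure E} (hξ : IsExcessiveMeas U ξ)
    {β : ℝ} (hβ : 0 < β) {M : Set E} (hM : MeasurableSet M) (h0 : ξ M = 0) :
    ξ {x | U β x M ≠ 0} = 0 := by
  have hbind : ξ.bind (U β) M = 0 := by
    have hle := Measure.le_iff'.1 (hξ β hβ) M
    rw [Measure.smul_apply, smul_eq_mul, h0, nonpos_iff_eq_zero] at hle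
    exact (mul_eq_zero.1 hle).resolve_left (ENNReal.ofReal_pos.2 hβ).ne'
  rw [Measure.bind_apply hM (Kernel.aemeasurable _)] at hbind
  exact (lintegral_eq_zero_iff (Kernel.measurable_coe _ hM)).1 hbind

theorem IsExcessiveMeas.measure_cleaningSeq {ξ : Measure E} (hξ : IsExcessiveMeas U ξ)
    {M : Set E} (hM : MeasurableSet M) (h0 : ξ M = 0) (k : ℕ) : ξ (cleaningSeq U M k) = 0 := by
  induction k with
  | zero => exact h0
  | succ k ih =>
    exact measure_union_null ih (measure_iUnion_null fun j =>
      hξ.measure_setOf_apply_ne_zero (by positivity) (measurableSet_cleaningSeq hM k) ih)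

theorem IsSubMarkovResolvent.apply_iUnion_cleaningSeq_eq_zero (hU : IsSubMarkovResolvent U)
    {M : Set E} (hM : MeasurableSet M) {x : E} (hx : x ∉ ⋃ k, cleaningSeq U M k) {β : ℝ}
    (hβ : 0 < β) : U β x (⋃ k, cleaningSeq U M k) = 0 := by
  refine measure_iUnion_null fun k => ?_
  obtain ⟨j, hj⟩ := exists_nat_one_div_lt hβ
  have hxj : U (1 / (j + 1)) x (cleaningSeq U M k) = 0 := by
    by_contra hne
    exact hx (mem_iUnion.2 ⟨k + 1, Or.inr (mem_iUnion.2 ⟨j, hne⟩)⟩)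
  have hS := measurableSet_cleaningSeq (U := U) hM k
  have := hU.resOp_antitone (by positivity) hj.le (measurable_one.indicator hS) x
  rwa [resOp_indicator_one hS, resOp_indicator_one hS, hxj, nonpos_iff_eq_zero] at this

theorem IsSubMarkovResolvent.exists_absorbing_null_superset (hU : IsSubMarkovResolvent U)
    {ξ : Measure E} (hξ : IsExcessiveMeas U ξ) {M : Set E} (hM : MeasurableSet M)
    (h0 : ξ M = 0) :
    ∃ N, M ⊆ N ∧ MeasurableSet N ∧ ξ N = 0 ∧ ∀ x ∉ N, ∀ β, 0 < β → U β x N = 0 :=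
  ⟨⋃ k, cleaningSeq U M k, subset_iUnion (cleaningSeq U M) 0,
    .iUnion (measurableSet_cleaningSeq hM), measure_iUnion_null (hξ.measure_cleaningSeq hM h0),
    fun _ hx _ hβ => hU.apply_iUnion_cleaningSeq_eq_zero hM hx hβ⟩

end Absorbing

/-- STATEMENT 9 (Proposition A1, 2) ⇒ 3)): if for every strictly positive measurable `f`
with `ξ(f) < ∞` one has `Uf < ∞` ξ-a.e., then there is a measurable `F` of full `ξ`-measure,
absorbing (`U(1_{E∖F}) = 0` on `F`), on which the restricted resolvent is proper. -/
theorem dissipative_gives_proper_restriction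
    (U : ℝ → ProbabilityTheory.Kernel E E) (hU : IsSubMarkovResolvent U)
    (ξ : Measure E) [SigmaFinite ξ] (hξ : IsExcessiveMeas U ξ)
    (h2 : ∀ f : E → ℝ≥0∞, Measurable f → (∀ x, 0 < f x) →
      (∫⁻ x, f x ∂ξ) < ⊤ → ∀ᵐ x ∂ξ, iniOp U f x < ⊤) :
    ∃ F : Set E, MeasurableSet F ∧ ξ Fᶜ = 0 ∧
      (∀ x ∈ F, iniOp U (Fᶜ.indicator 1) x = 0) ∧
      ∃ g : E → ℝ≥0∞, Measurable g ∧ (∀ x ∈ F, 0 < g x) ∧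
        (∃ c : ℝ≥0∞, c < ⊤ ∧ ∀ x, g x ≤ c) ∧ ∀ x ∈ F, iniOp U g x ≤ 1 := by
  obtain ⟨h, hh, hpos, h1, hint⟩ := exists_pos_le_one_lintegral_lt_top ξ
  have hv := hU.measurable_iniOp hh
  have hnull : ξ {x | iniOp U h x = ⊤} = 0 := by
    simpa [ae_iff] using h2 h hh hpos hint
  obtain ⟨N, hMN, hN, hξN, habs⟩ :=
    hU.exists_absorbing_null_superset hξ (hv (measurableSet_singleton ⊤)) hnull
  obtain ⟨g, hg, hgpos, hg1, hgU⟩ := hU.exists_resOp_le_one_of_resOp_one_lt (hv.add_const 1)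
    fun x hx => hU.resOp_one_lt_iniOp_add_one hh hpos h1 (by simpa using hx)
  refine ⟨Nᶜ, hN.compl, by rwa [compl_compl], fun x hx => ?_, g, hg,
    fun x hx => hgpos x (by simpa using fun h => hx (hMN h)), ⟨1, one_lt_top, hg1⟩,
    fun x _ => iSup₂_le fun β hβ => hgU β hβ x⟩
  rw [compl_compl]
  simpa [iniOp, resOp_indicator_one hN] using habs x hx
end

section
/- Let U be a sub-Markovian resolvent of kernels and ξ a U-excessive measure. Let f be measurable, strictly positive with ξ(f)<∞, and write ξ_d = ξ|_{[Uf<∞]} and ξ_c = ξ|_{[Uf=∞]}. Then ξ = ξ_d + ξ_c, and for every α>0 the sets [Uf<∞] and [Uf=∞] are such that U_α(1_{[Uf=∞]}) = 0 on [Uf<∞]; in particular ξ_d and ξ_c are each U-excessive. -/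
open MeasureTheory ProbabilityTheory ENNReal Set Filter

variable {E : Type*} [MeasurableSpace E]

open Topology

/-!
Write `T = αU_α`, a sub-Markov kernel for which `ξ` is excessive (`ξ ∘ T ≤ ξ`), and
`G = ∑ₙ Tⁿ` for its potential, so that `Gf = f + αUf` by the resolvent equation
(`Uf = ∑ₙ αⁿ U_α^{n+1} f`). The same series shows `αU_α(Uf) ≤ Uf`, so a point where `Uf`
is finite cannot charge `[Uf = ∞]`; this makes `ξ_d` excessive.

For `ξ_c` one needs the converse, which is Hopf's theorem: `ξ`-a.e. on `[Gf = ∞]` the kernel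
`T` does not charge `[Gf < ∞]`. By the maximal ergodic lemma, an integrable `ψ` with
`Gψ < ∞` vanishes a.e. on `[Gf = ∞]` (compare the partial sums of `Gψ` with those of `εGf`).
Apply this to `ψ = T(f 1_{[Gf ≤ m]})`: its potential is at most `m` by the maximum principle,
so `T(f 1_{[Gf ≤ m]}) = 0` a.e. on `[Gf = ∞]`, and `f > 0` turns this into
`T(x, [Gf ≤ m]) = 0`.
-/

noncomputable def kerOp (κ : Kernel E E) (g : E → ℝ≥0∞) (x : E) : ℝ≥0∞ := ∫⁻ y, g y ∂κ x

noncomputable def partialPot (κ : Kernel E E) (g : E → ℝ≥0∞) (n : ℕ) (x : E) : ℝ≥0∞ :=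
  ∑ k ∈ Finset.range n, (kerOp κ)^[k] g x

noncomputable def potential (κ : Kernel E E) (g : E → ℝ≥0∞) (x : E) : ℝ≥0∞ :=
  ∑' n, (kerOp κ)^[n] g x

section KernelOperator

variable {κ : Kernel E E} {ξ : Measure E} {g h : E → ℝ≥0∞}

lemma measurable_kerOp (hg : Measurable g) : Measurable (kerOp κ g) := hg.lintegral_kernel

lemma measurable_kerOp_iterate (hg : Measurable g) (n : ℕ) : Measurable ((kerOp κ)^[n] g) := by
  induction n with
  | zero => exact hg
  | succ n ih => rw [Function.iterate_succ_apply']; exact measurable_kerOp ih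

lemma monotone_kerOp : Monotone (kerOp κ) := fun _ _ hgh _ => lintegral_mono hgh

lemma kerOp_const_mul (c : ℝ≥0∞) (hg : Measurable g) (x : E) :
    kerOp κ (fun y => c * g y) x = c * kerOp κ g x :=
  lintegral_const_mul c hg

lemma kerOp_iterate_const_mul (c : ℝ≥0∞) (hg : Measurable g) (n : ℕ) (x : E) :
    (kerOp κ)^[n] (fun y => c * g y) x = c * (kerOp κ)^[n] g x := by
  induction n generalizing x with
  | zero => rfl
  | succ n ih =>
    simp only [Function.iterate_succ_apply']
    rw [show (kerOp κ)^[n] (fun y => c * g y) = fun y => c * (kerOp κ)^[n] g y from funext ih]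
    exact kerOp_const_mul c (measurable_kerOp_iterate hg n) x

lemma kerOp_const_le (hκ : ∀ x, κ x univ ≤ 1) (c : ℝ≥0∞) (x : E) :
    kerOp κ (fun _ => c) x ≤ c := by
  rw [kerOp, lintegral_const]
  exact mul_le_of_le_one_right' (hκ x)

lemma lintegral_kerOp_le (hξ : ξ.bind κ ≤ ξ) (hg : Measurable g) :
    ∫⁻ x, kerOp κ g x ∂ξ ≤ ∫⁻ x, g x ∂ξ :=
  calc ∫⁻ x, kerOp κ g x ∂ξ = ∫⁻ y, g y ∂ξ.bind κ :=
        (Measure.lintegral_bind κ.aemeasurable hg.aemeasurable).symm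
    _ ≤ ∫⁻ x, g x ∂ξ := lintegral_mono' hξ le_rfl

lemma lintegral_kerOp_iterate_le (hξ : ξ.bind κ ≤ ξ) (hg : Measurable g) (n : ℕ) :
    ∫⁻ x, (kerOp κ)^[n] g x ∂ξ ≤ ∫⁻ x, g x ∂ξ := by
  induction n with
  | zero => rfl
  | succ n ih =>
    rw [Function.iterate_succ_apply']
    exact (lintegral_kerOp_le hξ (measurable_kerOp_iterate hg n)).trans ih

lemma ae_kernel_eq_zero_of_measure_eq_zero (hξ : ξ.bind κ ≤ ξ) {N : Set E}
    (hN : MeasurableSet N) (hξN : ξ N = 0) : ∀ᵐ x ∂ξ, κ x N = 0 := by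
  refine (lintegral_eq_zero_iff (κ.measurable_coe hN)).1 (le_antisymm ?_ zero_le)
  rw [← hξN, ← Measure.bind_apply hN κ.aemeasurable]
  exact hξ N

lemma measurable_partialPot (hg : Measurable g) (n : ℕ) : Measurable (partialPot κ g n) :=
  Finset.measurable_sum _ fun k _ => measurable_kerOp_iterate hg k

lemma partialPot_succ (hg : Measurable g) (n : ℕ) (x : E) :
    partialPot κ g (n + 1) x = g x + kerOp κ (partialPot κ g n) x := by
  have hshift : kerOp κ (partialPot κ g n) x = ∑ k ∈ Finset.range n, (kerOp κ)^[k + 1] g x := by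
    simp_rw [Function.iterate_succ_apply']
    exact lintegral_finsetSum _ fun k _ => measurable_kerOp_iterate hg k
  rw [hshift, partialPot, Finset.sum_range_succ', add_comm]
  rfl

lemma partialPot_mono (g : E → ℝ≥0∞) (x : E) : Monotone fun n => partialPot κ g n x :=
  fun _ _ hmn => Finset.sum_le_sum_of_subset (Finset.range_subset_range.2 hmn)

lemma lintegral_partialPot_ne_top (hξ : ξ.bind κ ≤ ξ) (hg : Measurable g)
    (hgi : ∫⁻ x, g x ∂ξ ≠ ⊤) (n : ℕ) : ∫⁻ x, partialPot κ g n x ∂ξ ≠ ⊤ := by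
  simp only [partialPot]
  rw [lintegral_finsetSum _ fun k _ => measurable_kerOp_iterate hg k]
  exact ENNReal.sum_ne_top.2 fun k _ =>
    ne_top_of_le_ne_top hgi (lintegral_kerOp_iterate_le hξ hg k)

lemma measurable_potential (hg : Measurable g) : Measurable (potential κ g) :=
  Measurable.tsum fun n => measurable_kerOp_iterate hg n

lemma potential_eq_iSup_partialPot (g : E → ℝ≥0∞) (x : E) :
    potential κ g x = ⨆ n, partialPot κ g n x :=
  ENNReal.tsum_eq_iSup_nat

lemma partialPot_le_potential (g : E → ℝ≥0∞) (n : ℕ) (x : E) :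
    partialPot κ g n x ≤ potential κ g x :=
  ENNReal.sum_le_tsum _

lemma potential_mono (hgh : g ≤ h) (x : E) : potential κ g x ≤ potential κ h x :=
  ENNReal.tsum_le_tsum fun n => monotone_kerOp.iterate n hgh x

lemma potential_const_mul (c : ℝ≥0∞) (hg : Measurable g) (x : E) :
    potential κ (fun y => c * g y) x = c * potential κ g x := by
  simp_rw [potential, kerOp_iterate_const_mul c hg]
  exact ENNReal.tsum_mul_left

lemma potential_eq_add_potential_kerOp (g : E → ℝ≥0∞) (x : E) :
    potential κ g x = g x + potential κ (kerOp κ g) x := by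
  rw [potential, potential, tsum_eq_zero_add' ENNReal.summable]
  simp only [Function.iterate_zero_apply, Function.iterate_succ_apply]

lemma potential_kerOp_le (g : E → ℝ≥0∞) (x : E) :
    potential κ (kerOp κ g) x ≤ potential κ g x := by
  rw [potential_eq_add_potential_kerOp g x]
  exact le_add_self

lemma kerOp_potential (hg : Measurable g) (x : E) :
    kerOp κ (potential κ g) x = potential κ (kerOp κ g) x := by
  simp_rw [potential, ← Function.iterate_succ_apply, Function.iterate_succ_apply']
  exact lintegral_tsum fun n => (measurable_kerOp_iterate hg n).aemeasurable

theorem potential_indicator_le (hκ : ∀ x, κ x univ ≤ 1) (hg : Measurable g) {B : Set E}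
    (hB : MeasurableSet B) {k : ℝ≥0∞} (hk : ∀ x ∈ B, potential κ g x ≤ k) (x : E) :
    potential κ (B.indicator g) x ≤ k := by
  suffices h : ∀ n y, partialPot κ (B.indicator g) n y ≤ k by
    rw [potential_eq_iSup_partialPot]
    exact iSup_le fun n => h n x
  intro n
  induction n with
  | zero => intro y; simp [partialPot]
  | succ n ih =>
    intro y
    by_cases hy : y ∈ B
    · calc partialPot κ (B.indicator g) (n + 1) y ≤ potential κ (B.indicator g) y :=
            partialPot_le_potential _ _ y
        _ ≤ potential κ g y := potential_mono (indicator_le_self B g) y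
        _ ≤ k := hk y hy
    · rw [partialPot_succ (hg.indicator hB), indicator_of_notMem hy, zero_add]
      exact (monotone_kerOp ih y).trans (kerOp_const_le hκ k y)

end KernelOperator

noncomputable def maxPartialDiff (κ : Kernel E E) (φ ψ : E → ℝ≥0∞) (N : ℕ) (x : E) : ℝ≥0∞ :=
  (Finset.range (N + 1)).sup' Finset.nonempty_range_add_one
    fun n => partialPot κ φ n x - partialPot κ ψ n x

section MaximalErgodic

variable {κ : Kernel E E} {ξ : Measure E} {f φ ψ : E → ℝ≥0∞}

lemma measurable_maxPartialDiff (hφ : Measurable φ) (hψ : Measurable ψ) (N : ℕ) :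
    Measurable (maxPartialDiff κ φ ψ N) :=
  Finset.measurable_range_sup'' fun n _ =>
    (measurable_partialPot hφ n).sub (measurable_partialPot hψ n)

lemma partialPot_le_add_maxPartialDiff {n N : ℕ} (hn : n ≤ N) (x : E) :
    partialPot κ φ n x ≤ partialPot κ ψ n x + maxPartialDiff κ φ ψ N x :=
  tsub_le_iff_left.1 <| Finset.le_sup' (fun n => partialPot κ φ n x - partialPot κ ψ n x)
    (Finset.mem_range_succ_iff.2 hn)

lemma maxPartialDiff_add_le (hφ : Measurable φ) (hψ : Measurable ψ) {N : ℕ} {x : E}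
    (hpos : 0 < maxPartialDiff κ φ ψ N x) (hfin : ∀ n, partialPot κ ψ n x ≠ ⊤) :
    maxPartialDiff κ φ ψ N x + ψ x ≤ φ x + kerOp κ (maxPartialDiff κ φ ψ N) x := by
  set M := maxPartialDiff κ φ ψ N
  obtain ⟨n, hn, hMn⟩ := Finset.exists_mem_eq_sup' Finset.nonempty_range_add_one
    fun n => partialPot κ φ n x - partialPot κ ψ n x
  change M x = _ at hMn
  obtain ⟨m, rfl⟩ : ∃ m, n = m + 1 := Nat.exists_eq_add_one.2 <| Nat.pos_of_ne_zero <| by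
    rintro rfl
    simp [hMn, partialPot] at hpos
  have hlt : partialPot κ ψ (m + 1) x < partialPot κ φ (m + 1) x :=
    tsub_pos_iff_lt.1 (hMn ▸ hpos)
  have hstep : kerOp κ (partialPot κ φ m) x ≤ kerOp κ (partialPot κ ψ m) x + kerOp κ M x :=
    calc kerOp κ (partialPot κ φ m) x ≤ kerOp κ (partialPot κ ψ m + M) x :=
          monotone_kerOp (fun y => partialPot_le_add_maxPartialDiff
            (by have := Finset.mem_range.1 hn; omega) y) x
      _ = kerOp κ (partialPot κ ψ m) x + kerOp κ M x :=
          lintegral_add_left (measurable_partialPot hψ m) _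
  have hTfin : kerOp κ (partialPot κ ψ m) x ≠ ⊤ :=
    ne_top_of_le_ne_top (hfin (m + 1)) (partialPot_succ hψ m x ▸ le_add_self)
  refine (ENNReal.add_le_add_iff_right hTfin).1 ?_
  calc M x + ψ x + kerOp κ (partialPot κ ψ m) x = M x + partialPot κ ψ (m + 1) x := by
        rw [partialPot_succ hψ, add_assoc]
    _ = partialPot κ φ (m + 1) x := by rw [hMn, tsub_add_cancel_of_le hlt.le]
    _ = φ x + kerOp κ (partialPot κ φ m) x := partialPot_succ hφ m x
    _ ≤ φ x + kerOp κ M x + kerOp κ (partialPot κ ψ m) x := by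
        rw [add_assoc, add_comm (kerOp κ M x)]
        gcongr

/-- Hopf's maximal ergodic lemma. -/
theorem setLIntegral_le_of_maxPartialDiff (hξ : ξ.bind κ ≤ ξ) (hφ : Measurable φ)
    (hψ : Measurable ψ) (hφi : ∫⁻ x, φ x ∂ξ ≠ ⊤) (hψi : ∫⁻ x, ψ x ∂ξ ≠ ⊤) (N : ℕ) :
    ∫⁻ x in {x | 0 < maxPartialDiff κ φ ψ N x}, ψ x ∂ξ
      ≤ ∫⁻ x in {x | 0 < maxPartialDiff κ φ ψ N x}, φ x ∂ξ := by
  set M := maxPartialDiff κ φ ψ N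
  set S := {x | 0 < M x}
  have hM : Measurable M := measurable_maxPartialDiff hφ hψ N
  have hS : MeasurableSet S := measurableSet_lt measurable_const hM
  have hMS : ∫⁻ x in S, M x ∂ξ = ∫⁻ x, M x ∂ξ :=
    setLIntegral_eq_of_support_subset fun x hx => pos_iff_ne_zero.2 hx
  have hMi : ∫⁻ x in S, M x ∂ξ ≠ ⊤ := by
    refine hMS ▸ ne_top_of_le_ne_top (lintegral_partialPot_ne_top hξ hφ hφi N)
      (lintegral_mono fun x => Finset.sup'_le _ _ fun n hn => tsub_le_self.trans ?_)
    exact partialPot_mono φ x (Finset.mem_range_succ_iff.1 hn)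
  have hfin : ∀ᵐ x ∂ξ, ∀ n, partialPot κ ψ n x ≠ ⊤ := ae_all_iff.2 fun n =>
    (ae_lt_top (measurable_partialPot hψ n) (lintegral_partialPot_ne_top hξ hψ hψi n)).mono
      fun _ hx => hx.ne
  refine (ENNReal.add_le_add_iff_right hMi).1 ?_
  calc ∫⁻ x in S, ψ x ∂ξ + ∫⁻ x in S, M x ∂ξ = ∫⁻ x in S, (M x + ψ x) ∂ξ := by
        rw [lintegral_add_left hM, add_comm]
    _ ≤ ∫⁻ x in S, (φ x + kerOp κ M x) ∂ξ := by
        refine setLIntegral_mono_ae' hS ?_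
        filter_upwards [hfin] with x hx hxS using maxPartialDiff_add_le hφ hψ hxS hx
    _ = ∫⁻ x in S, φ x ∂ξ + ∫⁻ x in S, kerOp κ M x ∂ξ := lintegral_add_left hφ _
    _ ≤ ∫⁻ x in S, φ x ∂ξ + ∫⁻ x in S, M x ∂ξ := by
        refine add_le_add le_rfl ((setLIntegral_le_lintegral _ _).trans ?_)
        exact hMS ▸ lintegral_kerOp_le hξ hM

theorem setLIntegral_le_of_exists_partialPot_lt (hξ : ξ.bind κ ≤ ξ) (hφ : Measurable φ)
    (hψ : Measurable ψ) (hφi : ∫⁻ x, φ x ∂ξ ≠ ⊤) (hψi : ∫⁻ x, ψ x ∂ξ ≠ ⊤) :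
    ∫⁻ x in {x | ∃ n, partialPot κ ψ n x < partialPot κ φ n x}, ψ x ∂ξ ≤ ∫⁻ x, φ x ∂ξ := by
  have hsub : {x | ∃ n, partialPot κ ψ n x < partialPot κ φ n x}
      ⊆ ⋃ N, {x | 0 < maxPartialDiff κ φ ψ N x} := by
    rintro x ⟨n, hn⟩
    refine mem_iUnion.2 ⟨n, (tsub_pos_iff_lt.2 hn).trans_le ?_⟩
    exact Finset.le_sup' (fun n => partialPot κ φ n x - partialPot κ ψ n x)
      (Finset.self_mem_range_succ n)
  have hmono : Monotone fun N => {x | 0 < maxPartialDiff κ φ ψ N x} :=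
    fun N N' hN x (hx : 0 < maxPartialDiff κ φ ψ N x) =>
      show 0 < maxPartialDiff κ φ ψ N' x from
        hx.trans_le <| Finset.sup'_mono _ (Finset.range_subset_range.2 (by omega)) _
  calc _ ≤ ∫⁻ x in ⋃ N, {x | 0 < maxPartialDiff κ φ ψ N x}, ψ x ∂ξ := lintegral_mono_set hsub
    _ = ⨆ N, ∫⁻ x in {x | 0 < maxPartialDiff κ φ ψ N x}, ψ x ∂ξ :=
        setLIntegral_iUnion_of_directed _ hmono.directed_le
    _ ≤ ∫⁻ x, φ x ∂ξ := iSup_le fun N =>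
        (setLIntegral_le_of_maxPartialDiff hξ hφ hψ hφi hψi N).trans
          (setLIntegral_le_lintegral _ _)

theorem ae_eq_zero_of_potential_eq_top (hξ : ξ.bind κ ≤ ξ) (hf : Measurable f)
    (hfi : ∫⁻ x, f x ∂ξ ≠ ⊤) (hψ : Measurable ψ) (hψi : ∫⁻ x, ψ x ∂ξ ≠ ⊤) :
    ∀ᵐ x ∂ξ, potential κ f x = ⊤ → potential κ ψ x < ⊤ → ψ x = 0 := by
  set A := {x | potential κ f x = ⊤ ∧ potential κ ψ x < ⊤}
  have hA : MeasurableSet A := ((measurable_potential hf) (measurableSet_singleton ⊤)).inter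
    (measurableSet_lt (measurable_potential hψ) measurable_const)
  have hbound : ∀ n : ℕ, ∫⁻ x in A, ψ x ∂ξ ≤ ((n + 1 : ℕ) : ℝ≥0∞)⁻¹ * ∫⁻ x, f x ∂ξ := by
    intro n
    set ε : ℝ≥0∞ := ((n + 1 : ℕ) : ℝ≥0∞)⁻¹
    have hε : ε ≠ 0 := ENNReal.inv_ne_zero.2 (natCast_ne_top _)
    have hsub : A ⊆ {x | ∃ m, partialPot κ ψ m x < partialPot κ (fun y => ε * f y) m x} := by
      rintro x ⟨hfx, hψx⟩
      rw [← ENNReal.mul_top hε, ← hfx, ← potential_const_mul ε hf,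
        potential_eq_iSup_partialPot (fun y => ε * f y) x] at hψx
      obtain ⟨m, hm⟩ := lt_iSup_iff.1 hψx
      exact ⟨m, (partialPot_le_potential ψ m x).trans_lt hm⟩
    calc ∫⁻ x in A, ψ x ∂ξ
        ≤ ∫⁻ x in {x | ∃ m, partialPot κ ψ m x < partialPot κ (fun y => ε * f y) m x},
            ψ x ∂ξ := lintegral_mono_set hsub
      _ ≤ ∫⁻ x, ε * f x ∂ξ := by
          refine setLIntegral_le_of_exists_partialPot_lt hξ (hf.const_mul ε) hψ ?_ hψi
          rw [lintegral_const_mul ε hf]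
          exact mul_ne_top (inv_ne_top.2 (by simp)) hfi
      _ = ε * ∫⁻ x, f x ∂ξ := lintegral_const_mul ε hf
  have hlim : Tendsto (fun n : ℕ => ((n + 1 : ℕ) : ℝ≥0∞)⁻¹ * ∫⁻ x, f x ∂ξ) atTop (𝓝 0) := by
    simpa using ENNReal.Tendsto.mul_const
      (ENNReal.tendsto_inv_nat_nhds_zero.comp (tendsto_add_atTop_nat 1)) (Or.inr hfi)
  have hzero : ∫⁻ x in A, ψ x ∂ξ = 0 := le_antisymm (ge_of_tendsto' hlim hbound) zero_le
  filter_upwards [(setLIntegral_eq_zero_iff hA hψ).1 hzero] with x hx hfx hψx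
    using hx ⟨hfx, hψx⟩

/-- Hopf's theorem: the conservative part `[Gf = ∞]` is `ξ`-a.e. closed. -/
theorem ae_kernel_setOf_potential_lt_top_eq_zero (hκ : ∀ x, κ x univ ≤ 1)
    (hξ : ξ.bind κ ≤ ξ) (hf : Measurable f) (hfpos : ∀ x, 0 < f x)
    (hfi : ∫⁻ x, f x ∂ξ ≠ ⊤) :
    ∀ᵐ x ∂ξ, potential κ f x = ⊤ → κ x {y | potential κ f y < ⊤} = 0 := by
  set B : ℕ → Set E := fun m => {y | potential κ f y ≤ m}
  have hB : ∀ m, MeasurableSet (B m) := fun m =>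
    measurableSet_le (measurable_potential hf) measurable_const
  have hunion : {y | potential κ f y < ⊤} = ⋃ m, B m := by
    ext y
    simp only [mem_iUnion]
    exact ⟨fun h => (ENNReal.exists_nat_gt h.ne).imp fun _ hm => hm.le,
      fun ⟨m, hm⟩ => hm.trans_lt (natCast_lt_top m)⟩
  have hnull : ∀ m, ∀ᵐ x ∂ξ, potential κ f x = ⊤ → κ x (B m) = 0 := by
    intro m
    have hfB : Measurable ((B m).indicator f) := hf.indicator (hB m)
    set ψ := kerOp κ ((B m).indicator f)
    have hψi : ∫⁻ x, ψ x ∂ξ ≠ ⊤ := ne_top_of_le_ne_top hfi <|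
      (lintegral_kerOp_le hξ hfB).trans (lintegral_mono (indicator_le_self _ _))
    have hψpot : ∀ x, potential κ ψ x < ⊤ := fun x =>
      calc potential κ ψ x ≤ potential κ ((B m).indicator f) x := potential_kerOp_le _ x
        _ ≤ m := potential_indicator_le hκ hf (hB m) (fun _ hy => hy) x
        _ < ⊤ := natCast_lt_top m
    filter_upwards [ae_eq_zero_of_potential_eq_top hξ hf hfi (measurable_kerOp hfB) hψi]
      with x hx hfx
    have hint : ∫⁻ y in B m, f y ∂κ x = 0 := by
      rw [← lintegral_indicator (hB m)]
      exact hx hfx (hψpot x)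
    exact measure_eq_zero_iff_ae_notMem.2 <| ((setLIntegral_eq_zero_iff (hB m) hf).1 hint).mono
      fun y hy hyB => (hfpos y).ne' (hy hyB)
  filter_upwards [ae_all_iff.2 hnull] with x hx hfx
  rw [hunion]
  exact measure_iUnion_null fun m => hx m hfx

end MaximalErgodic

section Resolvent

variable {U : ℝ → Kernel E E} {f g : E → ℝ≥0∞} {α γ : ℝ}

lemma measurable_resOp_iterate (hg : Measurable g) (n : ℕ) :
    Measurable ((resOp U α)^[n] g) :=
  measurable_kerOp_iterate (κ := U α) hg n

lemma resOp_le_resOp_of_le (hU : IsSubMarkovResolvent U) (hγ : 0 < γ) (hγα : γ ≤ α)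
    (hg : Measurable g) (x : E) : resOp U α g x ≤ resOp U γ g x := by
  rw [hU.2 γ α hγ hγα g hg x]
  exact le_self_add

lemma resOp_le_of_le_const (hU : IsSubMarkovResolvent U) (hα : 0 < α) {c : ℝ≥0∞}
    (hgc : ∀ y, g y ≤ c) (x : E) : resOp U α g x ≤ (ENNReal.ofReal α)⁻¹ * c :=
  calc resOp U α g x ≤ ∫⁻ _, c ∂U α x := lintegral_mono hgc
    _ = U α x univ * c := by rw [lintegral_const, mul_comm]
    _ ≤ (ENNReal.ofReal α)⁻¹ * c := by
        gcongr
        exact ENNReal.le_inv_iff_mul_le.2 (by rw [mul_comm]; exact hU.1 α hα x)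

lemma resOp_iterate_le_of_le_const (hU : IsSubMarkovResolvent U) (hα : 0 < α) {c : ℝ≥0∞}
    (hgc : ∀ y, g y ≤ c) (n : ℕ) (x : E) :
    (resOp U α)^[n] g x ≤ (ENNReal.ofReal α)⁻¹ ^ n * c := by
  induction n generalizing x with
  | zero => simpa using hgc x
  | succ n ih =>
    rw [Function.iterate_succ_apply', pow_succ', mul_assoc]
    exact resOp_le_of_le_const hU hα ih x

lemma resOp_eq_sum_add (hU : IsSubMarkovResolvent U) (hγ : 0 < γ) (hγα : γ ≤ α)
    (hg : Measurable g) (N : ℕ) (x : E) :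
    resOp U γ g x = ∑ n ∈ Finset.range N, ENNReal.ofReal (α - γ) ^ n * (resOp U α)^[n + 1] g x
      + ENNReal.ofReal (α - γ) ^ N * resOp U γ ((resOp U α)^[N] g) x := by
  induction N with
  | zero => simp
  | succ N ih =>
    rw [ih, hU.2 γ α hγ hγα _ (measurable_resOp_iterate hg N) x, Finset.sum_range_succ,
      Function.iterate_succ_apply' (resOp U α) N g]
    ring

lemma resOp_le_tsum_of_le_const (hU : IsSubMarkovResolvent U) (hγ : 0 < γ) (hγα : γ < α)
    (hg : Measurable g) {c : ℝ≥0∞} (hgc : ∀ y, g y ≤ c) (hc : c ≠ ⊤) (x : E) :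
    resOp U γ g x ≤ ∑' n, ENNReal.ofReal α ^ n * (resOp U α)^[n + 1] g x := by
  have hα : 0 < α := hγ.trans hγα
  have hρ : ENNReal.ofReal (α - γ) * (ENNReal.ofReal α)⁻¹ < 1 := by
    rw [← ENNReal.ofReal_inv_of_pos hα, ← ENNReal.ofReal_mul (by linarith), ← div_eq_mul_inv]
    exact ENNReal.ofReal_lt_one.2 ((div_lt_one hα).2 (by linarith))
  set ρ := ENNReal.ofReal (α - γ) * (ENNReal.ofReal α)⁻¹
  have hrem : ∀ N : ℕ, ENNReal.ofReal (α - γ) ^ N * resOp U γ ((resOp U α)^[N] g) x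
      ≤ (ENNReal.ofReal γ)⁻¹ * c * ρ ^ N := fun N =>
    calc ENNReal.ofReal (α - γ) ^ N * resOp U γ ((resOp U α)^[N] g) x
        ≤ ENNReal.ofReal (α - γ) ^ N * ((ENNReal.ofReal γ)⁻¹ * ((ENNReal.ofReal α)⁻¹ ^ N * c)) := by
          gcongr
          exact resOp_le_of_le_const hU hγ (resOp_iterate_le_of_le_const hU hα hgc N) x
      _ = (ENNReal.ofReal γ)⁻¹ * c * ρ ^ N := by
          rw [mul_pow]
          ring
  have hsum : ∀ N : ℕ, ∑ n ∈ Finset.range N, ENNReal.ofReal (α - γ) ^ n * (resOp U α)^[n + 1] g x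
      ≤ ∑' n, ENNReal.ofReal α ^ n * (resOp U α)^[n + 1] g x := fun N =>
    (Finset.sum_le_sum fun n _ => by gcongr; linarith).trans (ENNReal.sum_le_tsum _)
  have hlim : Tendsto (fun N : ℕ => ∑' n, ENNReal.ofReal α ^ n * (resOp U α)^[n + 1] g x
      + (ENNReal.ofReal γ)⁻¹ * c * ρ ^ N) atTop
      (𝓝 (∑' n, ENNReal.ofReal α ^ n * (resOp U α)^[n + 1] g x)) := by
    simpa using tendsto_const_nhds.add (ENNReal.Tendsto.const_mul
      (ENNReal.tendsto_pow_atTop_nhds_zero_of_lt_one hρ)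
      (Or.inr (mul_ne_top (inv_ne_top.2 (ENNReal.ofReal_pos.2 hγ).ne') hc)))
  exact ge_of_tendsto' hlim fun N =>
    (resOp_eq_sum_add hU hγ hγα.le hg N x).trans_le (add_le_add (hsum N) (hrem N))

lemma resOp_le_tsum (hU : IsSubMarkovResolvent U) (hα : 0 < α) (hγ : 0 < γ)
    (hf : Measurable f) (x : E) :
    resOp U γ f x ≤ ∑' n, ENNReal.ofReal α ^ n * (resOp U α)^[n + 1] f x := by
  rcases le_or_gt α γ with hαγ | hγα
  · calc resOp U γ f x ≤ resOp U α f x := resOp_le_resOp_of_le hU hα hαγ hf x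
      _ = ENNReal.ofReal α ^ 0 * (resOp U α)^[0 + 1] f x := by simp
      _ ≤ _ := ENNReal.le_tsum 0
  have htrunc : resOp U γ f x = ⨆ j : ℕ, resOp U γ (fun y => min (f y) j) x := by
    simp only [resOp]
    rw [← lintegral_iSup (fun j => hf.min measurable_const)
      fun i j hij y => min_le_min_left _ (Nat.cast_le.2 hij)]
    congr 1
    funext y
    rw [← inf_iSup_eq, iSup_natCast, inf_top_eq]
  rw [htrunc]
  refine iSup_le fun j => (resOp_le_tsum_of_le_const hU hγ hγα (hf.min measurable_const)
    (fun y => min_le_right _ _) (natCast_ne_top j) x).trans ?_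
  gcongr with n
  exact monotone_kerOp.iterate (n + 1) (fun y => min_le_left _ _) x

lemma tsum_le_iniOp (hU : IsSubMarkovResolvent U) (hα : 0 < α) (hf : Measurable f) (x : E) :
    ∑' n, ENNReal.ofReal α ^ n * (resOp U α)^[n + 1] f x ≤ iniOp U f x := by
  refine ENNReal.tsum_le_of_sum_range_le fun N => ?_
  have hlim : Tendsto (fun γ => ∑ n ∈ Finset.range N,
      ENNReal.ofReal (α - γ) ^ n * (resOp U α)^[n + 1] f x) (𝓝[>] 0)
      (𝓝 (∑ n ∈ Finset.range N, ENNReal.ofReal α ^ n * (resOp U α)^[n + 1] f x)) := by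
    refine tendsto_finsetSum _ fun n _ => ENNReal.Tendsto.mul_const ?_
      (Or.inl (pow_ne_zero _ (ENNReal.ofReal_pos.2 hα).ne'))
    have hsub : Tendsto (fun γ : ℝ => α - γ) (𝓝[>] 0) (𝓝 α) :=
      ((continuous_const.sub continuous_id).tendsto' 0 α (by simp)).mono_left nhdsWithin_le_nhds
    exact ((ENNReal.continuous_pow n).tendsto _).comp (ENNReal.tendsto_ofReal hsub)
  refine le_of_tendsto hlim ?_
  filter_upwards [Ioo_mem_nhdsGT hα] with γ ⟨hγ, hγα⟩
  calc _ ≤ resOp U γ f x := by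
        rw [resOp_eq_sum_add hU hγ hγα.le hf N x]
        exact le_self_add
    _ ≤ iniOp U f x := le_iSup₂ (f := fun γ (_ : 0 < γ) => resOp U γ f x) γ hγ

theorem iniOp_eq_tsum (hU : IsSubMarkovResolvent U) (hα : 0 < α) (hf : Measurable f) (x : E) :
    iniOp U f x = ∑' n, ENNReal.ofReal α ^ n * (resOp U α)^[n + 1] f x :=
  le_antisymm (iSup₂_le fun _ hγ => resOp_le_tsum hU hα hγ hf x) (tsum_le_iniOp hU hα hf x)

lemma measurable_iniOp (hU : IsSubMarkovResolvent U) (hf : Measurable f) :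
    Measurable (iniOp U f) := by
  rw [funext (iniOp_eq_tsum hU one_pos hf)]
  exact Measurable.tsum fun n => (measurable_resOp_iterate hf (n + 1)).const_mul _

end Resolvent

noncomputable def smulKernel (c : ℝ≥0∞) (κ : Kernel E E) : Kernel E E :=
  ⟨fun x => c • κ x, Measure.measurable_of_measurable_coe _ fun _ hs => by
    simpa using (κ.measurable_coe hs).const_mul c⟩

section ResolventKernel

variable {U : ℝ → Kernel E E} {ξ : Measure E} {f : E → ℝ≥0∞} {α : ℝ}

lemma kerOp_smulKernel (c : ℝ≥0∞) (κ : Kernel E E) (g : E → ℝ≥0∞) (x : E) :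
    kerOp (smulKernel c κ) g x = c * kerOp κ g x :=
  lintegral_smul_measure c g

lemma bind_smulKernel (c : ℝ≥0∞) (κ : Kernel E E) (μ : Measure E) :
    μ.bind (smulKernel c κ) = c • μ.bind κ := by
  ext s hs
  rw [Measure.bind_apply hs (smulKernel c κ).aemeasurable, Measure.smul_apply,
    Measure.bind_apply hs κ.aemeasurable, smul_eq_mul,
    ← lintegral_const_mul _ (κ.measurable_coe hs)]
  rfl

lemma kerOp_smulKernel_iterate (c : ℝ≥0∞) (κ : Kernel E E) {g : E → ℝ≥0∞}
    (hg : Measurable g) (n : ℕ) (x : E) :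
    (kerOp (smulKernel c κ))^[n] g x = c ^ n * (kerOp κ)^[n] g x := by
  induction n generalizing x with
  | zero => simp
  | succ n ih =>
    rw [Function.iterate_succ_apply', Function.iterate_succ_apply', kerOp_smulKernel,
      funext ih, kerOp_const_mul _ (measurable_kerOp_iterate hg n), pow_succ', mul_assoc]

/-- With `potential_eq_add_potential_kerOp`, this says that the potential of `αU_α` is
`f + αUf`. -/
lemma potential_smulKernel_kerOp (hU : IsSubMarkovResolvent U) (hα : 0 < α)
    (hf : Measurable f) (x : E) :
    potential (smulKernel (ENNReal.ofReal α) (U α))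
      (kerOp (smulKernel (ENNReal.ofReal α) (U α)) f) x = ENNReal.ofReal α * iniOp U f x := by
  simp_rw [potential, ← Function.iterate_succ_apply, kerOp_smulKernel_iterate _ _ hf,
    iniOp_eq_tsum hU hα hf x, pow_succ', mul_assoc]
  exact ENNReal.tsum_mul_left

lemma isSupermedian_iniOp (hU : IsSubMarkovResolvent U) (hf : Measurable f) :
    IsSupermedian U (iniOp U f) := by
  intro α hα x
  set κ := smulKernel (ENNReal.ofReal α) (U α)
  have hpot : potential κ (kerOp κ f) = fun y => ENNReal.ofReal α * iniOp U f y :=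
    funext (potential_smulKernel_kerOp hU hα hf)
  have hle : kerOp κ (potential κ (kerOp κ f)) x ≤ potential κ (kerOp κ f) x :=
    (kerOp_potential (measurable_kerOp hf) x).trans_le (potential_kerOp_le _ x)
  rw [hpot, kerOp_smulKernel, kerOp_const_mul _ (measurable_iniOp hU hf)] at hle
  exact (ENNReal.mul_le_mul_iff_right (ENNReal.ofReal_pos.2 hα).ne' ofReal_ne_top).1 hle

theorem kernel_compl_setOf_iniOp_lt_top_eq_zero (hU : IsSubMarkovResolvent U) (hα : 0 < α)
    (hf : Measurable f) {x : E} (hx : iniOp U f x < ⊤) :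
    U α x {y | iniOp U f y < ⊤}ᶜ = 0 := by
  have hfin : resOp U α (iniOp U f) x ≠ ⊤ := fun htop => by
    have := (isSupermedian_iniOp hU hf α hα x).trans_lt hx
    rw [htop, mul_top (ENNReal.ofReal_pos.2 hα).ne'] at this
    exact lt_irrefl _ this
  exact measure_eq_zero_iff_ae_notMem.2 <|
    (ae_lt_top (measurable_iniOp hU hf) hfin).mono fun _ hy hyc => hyc hy

theorem ae_kernel_setOf_iniOp_lt_top_eq_zero (hU : IsSubMarkovResolvent U)
    (hξ : IsExcessiveMeas U ξ) (hf : Measurable f) (hfpos : ∀ x, 0 < f x)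
    (hfi : ∫⁻ x, f x ∂ξ ≠ ⊤) (hα : 0 < α) :
    ∀ᵐ x ∂ξ, x ∈ {y | iniOp U f y < ⊤}ᶜ → U α x {y | iniOp U f y < ⊤} = 0 := by
  set κ := smulKernel (ENNReal.ofReal α) (U α)
  have hα' : ENNReal.ofReal α ≠ 0 := (ENNReal.ofReal_pos.2 hα).ne'
  have hκ : ∀ x, κ x univ ≤ 1 := hU.1 α hα
  have hξκ : ξ.bind κ ≤ ξ := (bind_smulKernel _ _ ξ).trans_le (hξ α hα)
  have hpot : ∀ y, potential κ f y = f y + ENNReal.ofReal α * iniOp U f y := fun y => by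
    rw [potential_eq_add_potential_kerOp, potential_smulKernel_kerOp hU hα hf]
  have hftop : MeasurableSet {y | f y = ⊤} := hf (measurableSet_singleton ⊤)
  have hfnull : ξ {y | f y = ⊤} = 0 := measure_eq_zero_iff_ae_notMem.2 <|
    (ae_lt_top hf hfi).mono fun _ hy hyt => hy.ne hyt
  have hsub : {y | iniOp U f y < ⊤} ⊆ {y | potential κ f y < ⊤} ∪ {y | f y = ⊤} := by
    intro y hy
    by_cases hfy : f y = ⊤
    · exact Or.inr hfy
    · exact Or.inl (show potential κ f y < ⊤ by
        rw [hpot]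
        exact add_lt_top.2 ⟨lt_top_iff_ne_top.2 hfy, mul_lt_top ofReal_lt_top hy⟩)
  filter_upwards [ae_kernel_setOf_potential_lt_top_eq_zero hκ hξκ hf hfpos hfi,
    ae_kernel_eq_zero_of_measure_eq_zero hξκ hftop hfnull] with x hx hxf hxD
  have hxtop : potential κ f x = ⊤ := by
    rw [hpot, not_lt_top_iff.1 (show ¬iniOp U f x < ⊤ from hxD), mul_top hα', add_top]
  have hκD : κ x {y | iniOp U f y < ⊤} = 0 :=
    measure_mono_null hsub (measure_union_null (hx hxtop) hxf)
  simpa [κ, smulKernel, hα'] using hκD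

theorem isExcessiveMeas_restrict (hξ : IsExcessiveMeas U ξ) {S : Set E} (hS : MeasurableSet S)
    (hSc : ∀ α : ℝ, 0 < α → ∀ᵐ x ∂ξ, x ∈ S → U α x Sᶜ = 0) :
    IsExcessiveMeas U (ξ.restrict S) := by
  intro α hα
  refine Measure.le_iff.2 fun A hA => ?_
  rw [Measure.smul_apply, Measure.bind_apply hA (U α).aemeasurable, Measure.restrict_apply hA,
    smul_eq_mul]
  calc ENNReal.ofReal α * ∫⁻ x in S, U α x A ∂ξ
      = ENNReal.ofReal α * ∫⁻ x in S, U α x (A ∩ S) ∂ξ := by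
        congr 1
        refine setLIntegral_congr_fun_ae hS ?_
        filter_upwards [hSc α hα] with x hx hxS using (measure_inter_conull (hx hxS)).symm
    _ ≤ ENNReal.ofReal α * ∫⁻ x, U α x (A ∩ S) ∂ξ :=
        mul_le_mul_right (setLIntegral_le_lintegral _ _) _
    _ = (ENNReal.ofReal α • ξ.bind (U α)) (A ∩ S) := by
        rw [Measure.smul_apply, Measure.bind_apply (hA.inter hS) (U α).aemeasurable, smul_eq_mul]
    _ ≤ ξ (A ∩ S) := hξ α hα _

end ResolventKernel

theorem dissipative_conservative_decomposition_general
    (U : ℝ → ProbabilityTheory.Kernel E E) (hU : IsSubMarkovResolvent U)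
    (ξ : Measure E) (hξ : IsExcessiveMeas U ξ)
    (f : E → ℝ≥0∞) (hf : Measurable f) (hfpos : ∀ x, 0 < f x)
    (hfin : (∫⁻ x, f x ∂ξ) < ⊤) :
    ξ = ξ.restrict {x | iniOp U f x < ⊤} + ξ.restrict {x | iniOp U f x < ⊤}ᶜ ∧
    (∀ α : ℝ, 0 < α → ∀ x ∈ {x | iniOp U f x < ⊤},
      resOp U α ({x | iniOp U f x < ⊤}ᶜ.indicator 1) x = 0) ∧
    IsExcessiveMeas U (ξ.restrict {x | iniOp U f x < ⊤}) ∧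
    IsExcessiveMeas U (ξ.restrict {x | iniOp U f x < ⊤}ᶜ) := by
  have hD : MeasurableSet {x | iniOp U f x < ⊤} :=
    measurableSet_lt (measurable_iniOp hU hf) measurable_const
  have habsorb : ∀ α : ℝ, 0 < α → ∀ x ∈ {x | iniOp U f x < ⊤},
      U α x {x | iniOp U f x < ⊤}ᶜ = 0 := fun α hα x hx =>
    kernel_compl_setOf_iniOp_lt_top_eq_zero hU hα hf hx
  refine ⟨(Measure.restrict_add_restrict_compl hD).symm, fun α hα x hx => ?_,
    isExcessiveMeas_restrict hξ hD fun α hα => ae_of_all _ (habsorb α hα),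
    isExcessiveMeas_restrict hξ hD.compl fun α hα => ?_⟩
  · rw [resOp, lintegral_indicator_one hD.compl]
    exact habsorb α hα x hx
  · simpa only [compl_compl] using
      ae_kernel_setOf_iniOp_lt_top_eq_zero hU hξ hf hfpos hfin.ne hα

/-- for a `U`-excessive measure `ξ` and a strictly positive `f` with
`ξ(f) < ∞`, setting `D = [Uf < ∞]`, one has `ξ = ξ|_D + ξ|_{Dᶜ}`, the set `Dᶜ = [Uf = ∞]`
is not charged by `U_α` from points of `D`, and both restrictions are `U`-excessive. -/
theorem dissipative_conservative_decomposition
    (U : ℝ → ProbabilityTheory.Kernel E E) (hU : IsSubMarkovResolvent U)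
    (ξ : Measure E) [SigmaFinite ξ] (hξ : IsExcessiveMeas U ξ)
    (f : E → ℝ≥0∞) (hf : Measurable f) (hfpos : ∀ x, 0 < f x)
    (hfin : (∫⁻ x, f x ∂ξ) < ⊤) :
    ξ = ξ.restrict {x | iniOp U f x < ⊤} + ξ.restrict {x | iniOp U f x < ⊤}ᶜ ∧
    (∀ α : ℝ, 0 < α → ∀ x ∈ {x | iniOp U f x < ⊤},
      resOp U α ({x | iniOp U f x < ⊤}ᶜ.indicator 1) x = 0) ∧
    IsExcessiveMeas U (ξ.restrict {x | iniOp U f x < ⊤}) ∧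
    IsExcessiveMeas U (ξ.restrict {x | iniOp U f x < ⊤}ᶜ) :=
  dissipative_conservative_decomposition_general U hU ξ hξ f hf hfpos hfin
end

section
/- Let (V_α)_{α>0} be a sub-Markovian strongly continuous resolvent of contractions on L^p(E,μ), p ∈ [1,∞), P_β the cone of β-potentials (u ∈ L^p_+ with αV_{β+α}u ≤ u for all α>0), and R_β the réduite operator on P_β. If 0 < β < β' and u ∈ P_{β'}, then v = u + (β'−β)V_β u belongs to P_β, and for any increasing sequence u_n ↗ u in P_{β'}, setting v_n = u_n + (β'−β)V_β u, one has v_n ∈ P_β, v_n ↗ v, and R_{β'}(u−u_n) = R_{β'}(v−v_n) ≤ R_β(v−v_n). -/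
open MeasureTheory Filter ENNReal

variable {E : Type*} [MeasurableSpace E] {μ : MeasureTheory.Measure E}
  {p : ℝ≥0∞} [Fact (1 ≤ p)]

/-- A sub-Markovian strongly continuous resolvent of contractions on `L^p(E,μ)`:
positivity preserving, `α V_α` contractions, resolvent equation, sub-Markov property,
and strong continuity `α V_α f → f`. -/
def IsSubMarkovLpResolvent (V : ℝ → Lp ℝ p μ →L[ℝ] Lp ℝ p μ) : Prop :=
  (∀ α : ℝ, 0 < α → ∀ f : Lp ℝ p μ, 0 ≤ f → 0 ≤ V α f) ∧
  (∀ α : ℝ, 0 < α → ∀ f : Lp ℝ p μ, ‖α • V α f‖ ≤ ‖f‖) ∧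
  (∀ α β : ℝ, 0 < α → 0 < β → V α - V β = (β - α) • ((V α).comp (V β))) ∧
  (∀ α : ℝ, 0 < α → ∀ f : Lp ℝ p μ, 0 ≤ f → (∀ᵐ x ∂μ, f x ≤ 1) →
    ∀ᵐ x ∂μ, α * (V α f) x ≤ 1) ∧
  (∀ f : Lp ℝ p μ, Tendsto (fun α : ℝ => α • V α f) atTop (nhds f))

/-- `u` is a `β`-potential: `u ≥ 0` and `α V_{β+α} u ≤ u` for all `α > 0`. -/
def IsPotentialLp (V : ℝ → Lp ℝ p μ →L[ℝ] Lp ℝ p μ) (β : ℝ) (u : Lp ℝ p μ) : Prop :=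
  0 ≤ u ∧ ∀ α : ℝ, 0 < α → α • (V (β + α)) u ≤ u

/-- `r` is the réduite `R_β w`: the least `β`-potential dominating `w`. -/
def IsReduiteLp (V : ℝ → Lp ℝ p μ →L[ℝ] Lp ℝ p μ) (β : ℝ) (w r : Lp ℝ p μ) : Prop :=
  IsPotentialLp V β r ∧ w ≤ r ∧ ∀ v : Lp ℝ p μ, IsPotentialLp V β v → w ≤ v → r ≤ v

/-- `u` is a regular `β`-potential: for every increasing sequence `u_n ↗ u` of
`β`-potentials, the réduites `R_β(u - u_n)` decrease to `0`. -/
def IsRegularPotLp (V : ℝ → Lp ℝ p μ →L[ℝ] Lp ℝ p μ) (β : ℝ) (u : Lp ℝ p μ) : Prop :=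
  IsPotentialLp V β u ∧ ∀ un : ℕ → Lp ℝ p μ, (∀ n, IsPotentialLp V β (un n)) →
    Monotone un → IsLUB (Set.range un) u →
    ∀ r : ℕ → Lp ℝ p μ, (∀ n, IsReduiteLp V β (u - un n) (r n)) →
      IsGLB (Set.range r) 0

/-!
For `α > 0` the resolvent equation gives `α V_{β+α} V_β u = V_β u - V_{β+α} u`, hence
`α V_{β+α} (u + (β'-β) V_β u) = (α - (β'-β)) V_{β+α} u + (β'-β) V_β u`, and since
`β + α = β' + (α - (β'-β))` the first term is at most `u`: by the `β'`-potential property when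
`α > β' - β`, and because it is nonpositive otherwise. Writing
`v_n = (u_n + (β'-β) V_β u_n) + (β'-β) V_β (u - u_n)` shows `v_n ∈ P_β`. Finally
`v - v_n = u - u_n`, and the réduite in the larger cone `P_{β'} ⊇ P_β` is the smaller one.
-/

omit [Fact (1 ≤ p)] in
instance : PosSMulMono ℝ (Lp ℝ p μ) :=
  .of_smul_nonneg fun c hc f hf => by
    rw [← Lp.coeFn_nonneg] at hf ⊢
    filter_upwards [hf, Lp.coeFn_smul c f] with x hfx hcf
    rw [hcf]
    exact mul_nonneg hc hfx

theorem isLUB_range_add_const {ι α : Type*} [AddGroup α] [PartialOrder α] [AddRightMono α]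
    {f : ι → α} {a : α} (h : IsLUB (Set.range f) a) (c : α) :
    IsLUB (Set.range fun i => f i + c) (a + c) := by
  rw [Set.range_comp' (· + c) f]
  exact (OrderIso.addRight c).isLUB_image'.2 h

section Resolvent

variable {V : ℝ → Lp ℝ p μ →L[ℝ] Lp ℝ p μ}

theorem IsSubMarkovLpResolvent.sub_apply (hV : IsSubMarkovLpResolvent V) {a b : ℝ}
    (ha : 0 < a) (hb : 0 < b) (f : Lp ℝ p μ) :
    V a f - V b f = (b - a) • V a (V b f) := by
  simpa using congr($(hV.2.2.1 a b ha hb) f)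

theorem IsSubMarkovLpResolvent.smul_add_apply_apply (hV : IsSubMarkovLpResolvent V) {β α : ℝ}
    (hβ : 0 < β) (hα : 0 < α) (f : Lp ℝ p μ) :
    α • V (β + α) (V β f) = V β f - V (β + α) f := by
  have h := hV.sub_apply (add_pos hβ hα) hβ f
  rw [show β - (β + α) = -α by ring, neg_smul] at h
  rw [← neg_sub, h, neg_neg]

theorem IsSubMarkovLpResolvent.apply_le_apply_of_le (hV : IsSubMarkovLpResolvent V) {a b : ℝ}
    (ha : 0 < a) (hab : a ≤ b) {f : Lp ℝ p μ} (hf : 0 ≤ f) : V b f ≤ V a f := by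
  have hb := ha.trans_le hab
  rw [← sub_nonneg, hV.sub_apply ha hb]
  exact smul_nonneg (sub_nonneg.2 hab) (hV.1 a ha _ (hV.1 b hb f hf))

theorem IsPotentialLp.add {β : ℝ} {f g : Lp ℝ p μ} (hf : IsPotentialLp V β f)
    (hg : IsPotentialLp V β g) : IsPotentialLp V β (f + g) := by
  refine ⟨add_nonneg hf.1 hg.1, fun α hα => ?_⟩
  rw [map_add, smul_add]
  exact add_le_add (hf.2 α hα) (hg.2 α hα)

theorem IsPotentialLp.smul {β c : ℝ} (hc : 0 ≤ c) {f : Lp ℝ p μ} (hf : IsPotentialLp V β f) :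
    IsPotentialLp V β (c • f) := by
  refine ⟨smul_nonneg hc hf.1, fun α hα => ?_⟩
  rw [map_smul, smul_comm]
  exact smul_le_smul_of_nonneg_left (hf.2 α hα) hc

theorem IsPotentialLp.mono_index (hV : IsSubMarkovLpResolvent V) {β β' : ℝ} (hβ : 0 < β)
    (hββ' : β ≤ β') {u : Lp ℝ p μ} (hu : IsPotentialLp V β u) : IsPotentialLp V β' u := by
  refine ⟨hu.1, fun α hα => ?_⟩
  calc α • V (β' + α) u ≤ α • V (β + α) u :=
        smul_le_smul_of_nonneg_left (hV.apply_le_apply_of_le (by linarith) (by linarith) hu.1) hα.le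
    _ ≤ u := hu.2 α hα

theorem isPotentialLp_apply (hV : IsSubMarkovLpResolvent V) {β : ℝ} (hβ : 0 < β)
    {f : Lp ℝ p μ} (hf : 0 ≤ f) : IsPotentialLp V β (V β f) := by
  refine ⟨hV.1 β hβ f hf, fun α hα => ?_⟩
  rw [hV.smul_add_apply_apply hβ hα, sub_le_self_iff]
  exact hV.1 (β + α) (by linarith) f hf

theorem IsPotentialLp.add_smul_apply (hV : IsSubMarkovLpResolvent V) {β β' : ℝ} (hβ : 0 < β)
    (hββ' : β ≤ β') {u : Lp ℝ p μ} (hu : IsPotentialLp V β' u) :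
    IsPotentialLp V β (u + (β' - β) • V β u) := by
  have hVu : 0 ≤ V β u := hV.1 β hβ u hu.1
  refine ⟨add_nonneg hu.1 (smul_nonneg (sub_nonneg.2 hββ') hVu), fun α hα => ?_⟩
  have hexpand : α • V (β + α) (u + (β' - β) • V β u)
      = (α - (β' - β)) • V (β + α) u + (β' - β) • V β u := by
    rw [map_add, map_smul, smul_add, smul_comm α, hV.smul_add_apply_apply hβ hα]
    module
  have hle : (α - (β' - β)) • V (β + α) u ≤ u := by
    rcases le_or_gt (α - (β' - β)) 0 with hc | hc
    · exact (smul_nonpos_of_nonpos_of_nonneg hc (hV.1 _ (by linarith) u hu.1)).trans hu.1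
    · simpa [show β' + (α - (β' - β)) = β + α by ring] using hu.2 _ hc
  rw [hexpand]
  exact add_le_add_left hle _

theorem IsReduiteLp.le_of_index_le (hV : IsSubMarkovLpResolvent V) {β β' : ℝ} (hβ : 0 < β)
    (hββ' : β ≤ β') {w r r' : Lp ℝ p μ} (hr' : IsReduiteLp V β' w r') (hr : IsReduiteLp V β w r) :
    r' ≤ r :=
  hr'.2.2 r (hr.1.mono_index hV hβ hββ') hr.2.1

end Resolvent

/-- for `0 < β < β'` and a `β'`-potential `u`, `v = u + (β'-β) V_β u` is a
`β`-potential; for any increasing sequence `u_n ↗ u` of `β'`-potentials, the elements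
`v_n = u_n + (β'-β) V_β u` are `β`-potentials increasing to `v`, and
`R_{β'}(u - u_n) = R_{β'}(v - v_n) ≤ R_β(v - v_n)`. -/
theorem potential_cone_comparison
    (V : ℝ → Lp ℝ p μ →L[ℝ] Lp ℝ p μ) (hV : IsSubMarkovLpResolvent V)
    (β β' : ℝ) (hβ : 0 < β) (hββ' : β < β')
    (u : Lp ℝ p μ) (hu : IsPotentialLp V β' u)
    (un : ℕ → Lp ℝ p μ) (hun : ∀ n, IsPotentialLp V β' (un n))
    (hmono : Monotone un) (hlub : IsLUB (Set.range un) u) :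
    IsPotentialLp V β (u + (β' - β) • V β u) ∧
    (∀ n, IsPotentialLp V β (un n + (β' - β) • V β u)) ∧
    Monotone (fun n => un n + (β' - β) • V β u) ∧
    IsLUB (Set.range (fun n => un n + (β' - β) • V β u)) (u + (β' - β) • V β u) ∧
    (∀ n r, IsReduiteLp V β' (u - un n) r ↔
      IsReduiteLp V β' ((u + (β' - β) • V β u) - (un n + (β' - β) • V β u)) r) ∧
    (∀ n r' r,
      IsReduiteLp V β' ((u + (β' - β) • V β u) - (un n + (β' - β) • V β u)) r' →
      IsReduiteLp V β ((u + (β' - β) • V β u) - (un n + (β' - β) • V β u)) r →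
      r' ≤ r) := by
  refine ⟨hu.add_smul_apply hV hβ hββ'.le, fun n => ?_,
    fun m n hmn => add_le_add_left (hmono hmn) _, isLUB_range_add_const hlub _, fun n r => by rw [add_sub_add_right_eq_sub],
    fun n r' r => IsReduiteLp.le_of_index_le hV hβ hββ'.le⟩
  have hdecomp : un n + (β' - β) • V β u
      = (un n + (β' - β) • V β (un n)) + (β' - β) • V β (u - un n) := by
    rw [map_sub, smul_sub]
    abel
  rw [hdecomp]
  exact ((hun n).add_smul_apply hV hβ hββ'.le).add <|
    (isPotentialLp_apply hV hβ (sub_nonneg.2 (hlub.1 ⟨n, rfl⟩))).smul (sub_nonneg.2 hββ'.le)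
end
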